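/- arXiv:1009.0343 — 10 statements merged into one kernel-verified Lean document; each statement's English description precedes it below -/
import Mathlib

section
/- If G is a connected graph and v is an internal vertex of a geodesic (shortest) path of length 3 in G, then the degree of v in the cube G³ is at least 2·δ(G), where δ(G) is the minimum degree of G. -/
open SimpleGraph

/-- The set of vertices at distance at most `k` from `v` (the closed `k`-ball). -/
def ball {V : Type*} (G : SimpleGraph V) (k : ℕ∞) (v : V) : Set V := {u | G.edist v u ≤ k}

/-- The set of vertices at distance at most `k` from the set `X`. -/
def nbhd {V : Type*} (G : SimpleGraph V) (k : ℕ∞) (X : Set V) : Set V :=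
  {u | ∃ x ∈ X, G.edist x u ≤ k}

/-- The cube of a graph: vertices adjacent iff at distance `1 ≤ d ≤ 3`. -/
def cube {V : Type*} (G : SimpleGraph V) : SimpleGraph V where
  Adj u w := u ≠ w ∧ G.edist u w ≤ 3
  symm := ⟨fun u w h => ⟨h.1.symm, by rw [edist_comm]; exact h.2⟩⟩
  loopless := ⟨fun u h => h.1 rfl⟩

/-- The set of doubling vertices: `deg_{G³}(v) ≥ 2·δ(G)`. -/
def doubling {V : Type*} [Fintype V] (G : SimpleGraph V) [DecidableRel G.Adj] : Set V :=
  {v | 2 * G.minDegree ≤ ((cube G).neighborSet v).ncard}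

/-- The vertex set (in `V`) of the component `c` of `G - Z`. -/
def compSupp {V : Type*} [Fintype V] (G : SimpleGraph V) [DecidableRel G.Adj]
    (c : (G.induce (doubling G)ᶜ).ConnectedComponent) : Set V :=
  Subtype.val '' c.supp

/-- Two components of `G - Z` are related iff their closed neighborhoods intersect. -/
def compNear {V : Type*} [Fintype V] (G : SimpleGraph V) [DecidableRel G.Adj]
    (c d : (G.induce (doubling G)ᶜ).ConnectedComponent) : Prop :=
  (nbhd G 1 (compSupp G c) ∩ nbhd G 1 (compSupp G d)).Nonempty

/-- The union of the vertex sets of the equivalence class of the component `c`. -/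
def classUnion {V : Type*} [Fintype V] (G : SimpleGraph V) [DecidableRel G.Adj]
    (c : (G.induce (doubling G)ᶜ).ConnectedComponent) : Set V :=
  ⋃ d ∈ {d | compNear G c d}, compSupp G d

/-- If `v` is an internal vertex of a geodesic path of length 3 in a connected graph `G`,
then `deg_{G³}(v) ≥ 2·δ(G)`. -/
theorem stmt_0 {V : Type*} [Fintype V] (G : SimpleGraph V) [DecidableRel G.Adj]
    (hG : G.Connected) {u u' : V} (p : G.Walk u u') (hp : p.IsPath)
    (hlen : p.length = 3) (hgeo : p.length = G.dist u u')
    {v : V} (hv : v ∈ p.support) (hvu : v ≠ u) (hvu' : v ≠ u') :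
    2 * G.minDegree ≤ ((cube G).neighborSet v).ncard := by
  classical
  haveI : Nonempty V := ⟨u⟩
  have h3 : G.dist u u' = 3 := hgeo ▸ hlen
  -- distance facts
  have hsum : (p.takeUntil v hv).length + (p.dropUntil v hv).length = 3 := by
    rw [← SimpleGraph.Walk.length_append, SimpleGraph.Walk.take_spec]; exact hlen
  have ha : G.dist u v ≤ (p.takeUntil v hv).length := SimpleGraph.dist_le _
  have hb : G.dist v u' ≤ (p.dropUntil v hv).length := SimpleGraph.dist_le _
  have htri : G.dist u u' ≤ G.dist u v + G.dist v u' := hG.dist_triangle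
  have ha1 : 0 < G.dist u v := hG.pos_dist_of_ne (fun h => hvu h.symm)
  have hb1 : 0 < G.dist v u' := hG.pos_dist_of_ne hvu'
  have ha2 : G.dist u v ≤ 2 := by omega
  have hb2 : G.dist v u' ≤ 2 := by omega
  -- edist = dist
  have ecast : ∀ x y : V, G.edist x y = (G.dist x y : ℕ∞) := by
    intro x y
    have : G.edist x y ≠ ⊤ := SimpleGraph.edist_ne_top_iff_reachable.mpr (hG x y)
    simp [SimpleGraph.dist, ENat.coe_toNat this]
  set A : Set V := insert u (G.neighborSet u) with hA
  set B : Set V := insert u' (G.neighborSet u') with hB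
  have distA : ∀ w ∈ A, G.dist u w ≤ 1 := by
    intro w hw
    rcases hw with h | h
    · subst h; simp [SimpleGraph.dist_self]
    · exact le_trans (SimpleGraph.dist_le ((G.mem_neighborSet u w).mp h).toWalk) (by simp)
  have distB : ∀ w ∈ B, G.dist w u' ≤ 1 := by
    intro w hw
    rcases hw with h | h
    · subst h; simp [SimpleGraph.dist_self]
    · rw [SimpleGraph.dist_comm]
      exact le_trans (SimpleGraph.dist_le ((G.mem_neighborSet u' w).mp h).toWalk) (by simp)
  have hdisj : Disjoint A B := by
    rw [Set.disjoint_left]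
    intro w hwA hwB
    have := hG.dist_triangle (u := u) (v := w) (w := u')
    have h1 := distA w hwA
    have h2 := distB w hwB
    omega
  -- subsets of the cube neighborhood
  have hsub : (A ∪ B) \ {v} ⊆ (cube G).neighborSet v := by
    rintro w ⟨hw, hwv⟩
    have hwv : w ≠ v := hwv
    have hd : G.dist v w ≤ 3 := by
      rcases hw with hw | hw
      · have h1 := distA w hw
        have := hG.dist_triangle (u := v) (v := u) (w := w)
        have : G.dist v u ≤ 2 := SimpleGraph.dist_comm .. ▸ ha2
        omega
      · have h1 := distB w hw
        have := hG.dist_triangle (u := v) (v := u') (w := w)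
        have : G.dist u' w ≤ 1 := SimpleGraph.dist_comm .. ▸ h1
        omega
    refine ⟨fun h => hwv h.symm, ?_⟩
    rw [ecast]
    exact_mod_cast hd
  -- counting
  have hAcard : G.minDegree + 1 ≤ A.ncard := by
    have h1 : A.ncard = (G.neighborSet u).ncard + 1 := by
      rw [hA, Set.ncard_insert_of_notMem (by simp) (Set.toFinite _)]
    have h2 : (G.neighborSet u).ncard = G.degree u := by
      rw [Set.ncard_eq_toFinset_card', ← SimpleGraph.neighborFinset_def]; rfl
    have := G.minDegree_le_degree u
    omega
  have hBcard : G.minDegree + 1 ≤ B.ncard := by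
    have h1 : B.ncard = (G.neighborSet u').ncard + 1 := by
      rw [hB, Set.ncard_insert_of_notMem (by simp) (Set.toFinite _)]
    have h2 : (G.neighborSet u').ncard = G.degree u' := by
      rw [Set.ncard_eq_toFinset_card', ← SimpleGraph.neighborFinset_def]; rfl
    have := G.minDegree_le_degree u'
    omega
  have hunion : (A ∪ B).ncard = A.ncard + B.ncard :=
    Set.ncard_union_eq hdisj (Set.toFinite _) (Set.toFinite _)
  have hdiff : (A ∪ B).ncard ≤ ((A ∪ B) \ {v}).ncard + 1 := by
    have h1 : A ∪ B ⊆ insert v ((A ∪ B) \ {v}) := by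
      intro w hw
      by_cases h : w = v
      · exact h ▸ Set.mem_insert _ _
      · exact Set.mem_insert_of_mem _ ⟨hw, h⟩
    calc (A ∪ B).ncard ≤ (insert v ((A ∪ B) \ {v})).ncard :=
          Set.ncard_le_ncard h1 (Set.toFinite _)
      _ ≤ ((A ∪ B) \ {v}).ncard + 1 := Set.ncard_insert_le _ _
  have hfin : ((A ∪ B) \ {v}).ncard ≤ ((cube G).neighborSet v).ncard :=
    Set.ncard_le_ncard hsub (Set.toFinite _)
  omega
end

section
/- Let G be a finite simple connected graph, let Z be the set of doubling vertices (vertices v with deg_{G³}(v) ≥ 2δ(G)), and let X be the vertex set of a connected component of G − Z. Then for any two vertices v, v' in X, the closed second neighborhoods satisfy N²(v) = N²(v'). -/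
open SimpleGraph

lemma closed_nbhd_ncard {V : Type*} [Fintype V] (G : SimpleGraph V) [DecidableRel G.Adj]
    (u : V) : G.minDegree + 1 ≤ {x | G.edist u x ≤ 1}.ncard := by
  have hsub : insert u (G.neighborSet u) ⊆ {x | G.edist u x ≤ 1} := by
    rintro x (rfl | hx)
    · simp [Set.mem_setOf_eq, edist_self]
    · have : G.edist u x = 1 := (edist_eq_one_iff_adj).2 hx
      simp [Set.mem_setOf_eq, this]
  have h1 : (insert u (G.neighborSet u)).ncard = G.degree u + 1 := by
    rw [Set.ncard_insert_of_notMem (by simp) (Set.toFinite _)]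
    rw [Set.ncard_eq_toFinset_card']
    have : (G.neighborSet u).toFinset = G.neighborFinset u := by ext x; simp
    rw [this, card_neighborFinset_eq_degree]
  have h2 := Set.ncard_le_ncard hsub (Set.toFinite _)
  have h3 := G.minDegree_le_degree u
  omega

lemma key_step {V : Type*} [Fintype V] (G : SimpleGraph V) [DecidableRel G.Adj]
    {v v' : V} (hv : v ∉ doubling G) (hadj : G.Adj v v') : ball G 2 v ⊆ ball G 2 v' := by
  intro w hw
  by_contra hw'
  have hvv' : G.edist v v' = 1 := (edist_eq_one_iff_adj).2 hadj
  have hvw : G.edist v w ≤ 2 := hw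
  have hv'w : ¬ G.edist v' w ≤ 2 := hw'
  set A : Set V := {x | G.edist v' x ≤ 1} \ {v} with hA
  set B : Set V := {x | G.edist w x ≤ 1} with hB
  -- A and B are disjoint
  have hdisj : Disjoint A B := by
    rw [Set.disjoint_left]
    rintro x ⟨hx1, _⟩ hx2
    apply hv'w
    calc G.edist v' w ≤ G.edist v' x + G.edist x w := G.edist_triangle
      _ ≤ 1 + 1 := add_le_add hx1 (by rw [edist_comm]; exact hx2)
      _ = 2 := by norm_num
  -- A ∪ B ⊆ cube neighborSet v
  have hsub : A ∪ B ⊆ (cube G).neighborSet v := by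
    rintro x (⟨hx1, hx2⟩ | hx)
    · refine ⟨fun h => hx2 (by simp [h.symm]), ?_⟩
      calc G.edist v x ≤ G.edist v v' + G.edist v' x := G.edist_triangle
        _ ≤ 1 + 1 := add_le_add hvv'.le hx1
        _ ≤ 3 := by norm_num
    · have hx : G.edist w x ≤ 1 := hx
      constructor
      · rintro rfl
        apply hv'w
        have h1 : G.edist v' v ≤ 1 := by rw [SimpleGraph.edist_comm]; exact hvv'.le
        have h2 : G.edist v w ≤ 1 := by rw [SimpleGraph.edist_comm]; exact hx
        calc G.edist v' w ≤ G.edist v' v + G.edist v w := G.edist_triangle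
          _ ≤ 1 + 1 := add_le_add h1 h2
          _ = 2 := by norm_num
      · calc G.edist v x ≤ G.edist v w + G.edist w x := G.edist_triangle
          _ ≤ 2 + 1 := add_le_add hvw hx
          _ = 3 := by norm_num
  -- cardinalities
  have hAcard : G.minDegree ≤ A.ncard := by
    have h1 := closed_nbhd_ncard G v'
    have h2 := Set.ncard_diff_singleton_le {x | G.edist v' x ≤ 1} v
    have h3 : A.ncard + 1 ≥ {x | G.edist v' x ≤ 1}.ncard := by
      have := Set.ncard_diff_singleton_add_one (s := {x | G.edist v' x ≤ 1}) (a := v)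
      rcases Classical.em (v ∈ {x | G.edist v' x ≤ 1}) with h | h
      · have h4 := this h
        simp only [hA]
        omega
      · rw [hA, Set.diff_singleton_eq_self h]; omega
    omega
  have hBcard : G.minDegree + 1 ≤ B.ncard := closed_nbhd_ncard G w
  have hunion : (A ∪ B).ncard = A.ncard + B.ncard :=
    Set.ncard_union_eq hdisj (Set.toFinite _) (Set.toFinite _)
  have hle := Set.ncard_le_ncard hsub (Set.toFinite _)
  have : 2 * G.minDegree ≤ ((cube G).neighborSet v).ncard := by omega
  exact hv this

/-- If `v, v'` lie in the same connected component of `G - Z` (`Z` the doubling vertices)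
then `N²(v) = N²(v')`. -/
theorem stmt_1 {V : Type*} [Fintype V] (G : SimpleGraph V) [DecidableRel G.Adj]
    (hG : G.Connected) {v v' : V} (hv : v ∈ (doubling G)ᶜ) (hv' : v' ∈ (doubling G)ᶜ)
    (hcomp : (G.induce (doubling G)ᶜ).Reachable ⟨v, hv⟩ ⟨v', hv'⟩) :
    ball G 2 v = ball G 2 v' := by
  obtain ⟨p⟩ := hcomp
  have : ∀ (a b : ((doubling G)ᶜ : Set V)) (_ : (G.induce (doubling G)ᶜ).Walk a b),
      ball G 2 (a : V) = ball G 2 (b : V) := by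
    intro a b p
    induction p with
    | nil => rfl
    | @cons x y z h p ih =>
      have hadj : G.Adj (x : V) (y : V) := h
      have h1 : ball G 2 (x : V) = ball G 2 (y : V) :=
        Set.Subset.antisymm (key_step G x.2 hadj) (key_step G y.2 hadj.symm)
      rw [h1, ih]
  exact this _ _ p
end

section
/- Let G be a finite simple connected graph and Z its set of doubling vertices. If v and v' are vertices of G − Z (not necessarily in the same component) such that N(v) ∩ N(v') ≠ ∅ (closed neighborhoods intersect), then N²(v) = N²(v'). -/
open SimpleGraph

lemma ball_one_ncard {V : Type*} [Fintype V] (G : SimpleGraph V) [DecidableRel G.Adj] (w : V) :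
    G.minDegree + 1 ≤ (ball G 1 w).ncard := by
  have hsub : insert w (G.neighborSet w) ⊆ ball G 1 w := by
    intro x hx
    rcases hx with rfl | hx
    · simp [_root_.ball]
    · have : G.edist w x = 1 := (edist_eq_one_iff_adj).2 hx
      simp [_root_.ball, this]
  have h1 : (insert w (G.neighborSet w)).ncard = G.degree w + 1 := by
    rw [Set.ncard_insert_of_notMem (by simp) (Set.toFinite _)]
    congr 1
    rw [Set.ncard_eq_toFinset_card']; rfl
  calc G.minDegree + 1 ≤ G.degree w + 1 := by
        exact Nat.add_le_add_right (G.minDegree_le_degree w) 1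
    _ = (insert w (G.neighborSet w)).ncard := h1.symm
    _ ≤ (ball G 1 w).ncard := Set.ncard_le_ncard hsub (Set.toFinite _)

lemma key {V : Type*} [Fintype V] (G : SimpleGraph V) [DecidableRel G.Adj] {v v' u : V}
    (hv : v ∉ doubling G) (hd : G.edist v v' ≤ 2) (hu : G.edist v u ≤ 2) :
    G.edist v' u ≤ 2 := by
  by_contra h
  push_neg at h
  have hAB : Disjoint (ball G 1 u) (ball G 1 v') := by
    rw [Set.disjoint_left]
    intro x hxu hxv'
    have : G.edist v' u ≤ 2 := by
      calc G.edist v' u ≤ G.edist v' x + G.edist x u := G.edist_triangle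
        _ ≤ 1 + 1 := by
            gcongr
            · exact hxv'
            · rw [edist_comm]; exact hxu
        _ = 2 := by norm_num
    exact absurd this (not_le.2 h)
  have hA3 : ball G 1 u ⊆ ball G 3 v := by
    intro x hx
    calc G.edist v x ≤ G.edist v u + G.edist u x := G.edist_triangle
      _ ≤ 2 + 1 := by gcongr; exact hx
      _ = 3 := by norm_num
  have hB3 : ball G 1 v' ⊆ ball G 3 v := by
    intro x hx
    calc G.edist v x ≤ G.edist v v' + G.edist v' x := G.edist_triangle
      _ ≤ 2 + 1 := by gcongr; exact hx
      _ = 3 := by norm_num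
  have hball_sub : ball G 3 v ⊆ insert v ((cube G).neighborSet v) := by
    intro x hx
    by_cases hxv : x = v
    · exact hxv ▸ Set.mem_insert _ _
    · exact Set.mem_insert_of_mem _ ⟨Ne.symm hxv, hx⟩
  have hcard_lo : 2 * G.minDegree + 2 ≤ (ball G 3 v).ncard := by
    have hunion : (ball G 1 u ∪ ball G 1 v').ncard
        = (ball G 1 u).ncard + (ball G 1 v').ncard :=
      Set.ncard_union_eq hAB (Set.toFinite _) (Set.toFinite _)
    calc 2 * G.minDegree + 2 = (G.minDegree + 1) + (G.minDegree + 1) := by ring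
      _ ≤ (ball G 1 u).ncard + (ball G 1 v').ncard :=
          Nat.add_le_add (ball_one_ncard G u) (ball_one_ncard G v')
      _ = (ball G 1 u ∪ ball G 1 v').ncard := hunion.symm
      _ ≤ (ball G 3 v).ncard := Set.ncard_le_ncard (Set.union_subset hA3 hB3) (Set.toFinite _)
  have hcard_hi : (ball G 3 v).ncard ≤ ((cube G).neighborSet v).ncard + 1 :=
    le_trans (Set.ncard_le_ncard hball_sub (Set.toFinite _)) (Set.ncard_insert_le _ _)
  have hnd : ((cube G).neighborSet v).ncard < 2 * G.minDegree := not_le.1 hv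
  omega

lemma two_of_meet {V : Type*} (G : SimpleGraph V) {v v' : V}
    (hmeet : (ball G 1 v ∩ ball G 1 v').Nonempty) : G.edist v v' ≤ 2 := by
  obtain ⟨x, hxv, hxv'⟩ := hmeet
  calc G.edist v v' ≤ G.edist v x + G.edist x v' := G.edist_triangle
    _ ≤ 1 + 1 := by
        gcongr
        · exact hxv
        · rw [edist_comm]; exact hxv'
    _ = 2 := by norm_num

/-- If `v, v'` are non-doubling vertices whose closed neighborhoods intersect,
then `N²(v) = N²(v')`. -/
theorem stmt_2 {V : Type*} [Fintype V] (G : SimpleGraph V) [DecidableRel G.Adj]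
    (hG : G.Connected) {v v' : V} (hv : v ∉ doubling G) (hv' : v' ∉ doubling G)
    (hmeet : (ball G 1 v ∩ ball G 1 v').Nonempty) :
    ball G 2 v = ball G 2 v' := by
  have hd : G.edist v v' ≤ 2 := two_of_meet G hmeet
  have hd' : G.edist v' v ≤ 2 := by rw [edist_comm]; exact hd
  ext u
  constructor
  · intro hu
    exact key G hv hd hu
  · intro hu
    exact key G hv' hd' hu
end

section
/- Let G be a finite simple connected graph, Z its set of doubling vertices, and X₁,…,X_m the vertex sets of the components of G − Z. Define X_i ∼ X_j iff N(X_i) ∩ N(X_j) ≠ ∅ (closed neighborhoods intersect). Then ∼ is an equivalence relation on {X₁,…,X_m}. -/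
open SimpleGraph

section Aux

variable {V : Type*} [Fintype V] (G : SimpleGraph V) [DecidableRel G.Adj]

lemma edist_le_one_cases {u v : V} (h : G.edist u v ≤ 1) : u = v ∨ G.Adj u v := by
  rcases eq_or_lt_of_le h with h1 | h1
  · exact Or.inr (edist_eq_one_iff_adj.mp h1)
  · exact Or.inl (edist_eq_zero_iff.mp (ENat.lt_one_iff_eq_zero.mp h1))

lemma mem_cube_nbr {y n : V} (hne : y ≠ n) (h3 : G.edist y n ≤ 3) :
    n ∈ (cube G).neighborSet y := And.intro hne h3

lemma minDeg_le_ncard (x : V) : G.minDegree ≤ (G.neighborSet x).ncard := by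
  rw [Set.ncard_eq_toFinset_card']
  exact G.minDegree_le_degree x

lemma nondoubling_card {y : V} (hy : y ∈ (doubling G)ᶜ) :
    ((cube G).neighborSet y).ncard < 2 * G.minDegree := by
  have : ¬ (2 * G.minDegree ≤ ((cube G).neighborSet y).ncard) := hy
  omega

lemma key_inter {y : V} (hy : ((cube G).neighborSet y).ncard < 2 * G.minDegree)
    {A B : Set V} (hA : A ⊆ (cube G).neighborSet y) (hB : B ⊆ (cube G).neighborSet y)
    (hcA : G.minDegree ≤ A.ncard) (hcB : G.minDegree ≤ B.ncard) : (A ∩ B).Nonempty := by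
  apply Set.nonempty_of_ncard_ne_zero
  have hu : (A ∪ B).ncard ≤ ((cube G).neighborSet y).ncard :=
    Set.ncard_le_ncard (Set.union_subset hA hB) (Set.toFinite _)
  have h2 := Set.ncard_union_add_ncard_inter A B (Set.toFinite _) (Set.toFinite _)
  omega

lemma nbr_subset {x y : V} (h2 : G.edist y x ≤ 2) (hn : ¬ G.Adj x y) :
    G.neighborSet x ⊆ (cube G).neighborSet y := by
  intro n hn'
  have hadj : G.Adj x n := hn'
  refine mem_cube_nbr G ?_ ?_
  · rintro rfl; exact hn hadj
  · calc G.edist y n ≤ G.edist y x + G.edist x n := G.edist_triangle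
      _ ≤ 2 + 1 := add_le_add h2 (le_of_eq (edist_eq_one_iff_adj.mpr hadj))
      _ = 3 := by norm_num

/-- Propagation step: if `x` has a common neighbor with `y` (hence `edist y x ≤ 2`), `y` is
non-doubling and `y''` is a neighbor of `y` not adjacent to `x`, then `x` and `y''` have a
common neighbor. -/
lemma step {x y y'' : V} (hy : y ∈ (doubling G)ᶜ)
    (hxy2 : G.edist y x ≤ 2) (hadj : G.Adj y y'')
    (hnxy : ¬ G.Adj x y) (hnxy'' : ¬ G.Adj x y'') :
    ∃ z, G.Adj x z ∧ G.Adj y'' z := by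
  have hcard := nondoubling_card G hy
  set B : Set V := insert y'' (G.neighborSet y'' \ {y}) with hBdef
  have hB : B ⊆ (cube G).neighborSet y := by
    rintro n (rfl | ⟨hn1, hn2⟩)
    · exact mem_cube_nbr G hadj.ne (le_trans (le_of_eq (edist_eq_one_iff_adj.mpr hadj))
        (by norm_num))
    · refine mem_cube_nbr G (fun h => hn2 h.symm) ?_
      calc G.edist y n ≤ G.edist y y'' + G.edist y'' n := G.edist_triangle
        _ ≤ 1 + 1 := add_le_add (le_of_eq (edist_eq_one_iff_adj.mpr hadj))
            (le_of_eq (edist_eq_one_iff_adj.mpr hn1))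
        _ ≤ 3 := by norm_num
  have hBcard : G.minDegree ≤ B.ncard := by
    have h1 : y'' ∉ G.neighborSet y'' \ {y} := fun h => G.irrefl h.1
    have h2 : y ∈ G.neighborSet y'' := hadj.symm
    have h3 : (G.neighborSet y'' \ {y}).ncard + 1 = (G.neighborSet y'').ncard :=
      Set.ncard_diff_singleton_add_one h2 (Set.toFinite _)
    have h4 : B.ncard = (G.neighborSet y'' \ {y}).ncard + 1 :=
      Set.ncard_insert_of_notMem h1 (Set.toFinite _)
    have := minDeg_le_ncard G y''
    omega
  obtain ⟨z, hzA, hzB⟩ := key_inter G hcard (nbr_subset G hxy2 hnxy) hB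
    (minDeg_le_ncard G x) hBcard
  rcases hzB with rfl | ⟨hz1, _⟩
  · exact absurd hzA hnxy''
  · exact ⟨z, hzA, hz1⟩

variable {G}

lemma cross {c d : (G.induce (doubling G)ᶜ).ConnectedComponent} (hne : c ≠ d)
    {a b : V} (ha : a ∈ compSupp G c) (hb : b ∈ compSupp G d) :
    ¬ G.Adj a b ∧ a ≠ b := by
  obtain ⟨aa, haa, rfl⟩ := ha
  obtain ⟨bb, hbb, rfl⟩ := hb
  rw [ConnectedComponent.mem_supp_iff] at haa hbb
  constructor
  · intro h
    have hH : (G.induce (doubling G)ᶜ).Adj aa bb := h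
    exact hne (haa ▸ hbb ▸ (ConnectedComponent.eq.mpr hH.reachable))
  · intro h
    exact hne (haa ▸ hbb ▸ congrArg _ (Subtype.ext h))

/-- Walking along a component `d ≠ c`, the property "has a common neighbor with `x`"
propagates. -/
lemma along {c d : (G.induce (doubling G)ᶜ).ConnectedComponent} (hne : c ≠ d)
    {x : V} (hx : x ∈ compSupp G c) :
    ∀ {u v : ↥(doubling G)ᶜ} (_ : (G.induce (doubling G)ᶜ).Walk u v),
      (G.induce (doubling G)ᶜ).connectedComponentMk u = d →
      (∃ z, G.Adj x z ∧ G.Adj u.val z) →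
      ∃ z, G.Adj x z ∧ G.Adj v.val z := by
  intro u v p
  induction p with
  | nil => exact fun _ hz => hz
  | @cons a b w h q ih =>
    intro ha hz
    obtain ⟨z, hxz, haz⟩ := hz
    have hb : (G.induce (doubling G)ᶜ).connectedComponentMk b = d :=
      (ConnectedComponent.eq.mpr h.reachable).symm.trans ha
    have haval : a.val ∈ compSupp G d := ⟨a, ConnectedComponent.mem_supp_iff _ _ |>.mpr ha, rfl⟩
    have hbval : b.val ∈ compSupp G d := ⟨b, ConnectedComponent.mem_supp_iff _ _ |>.mpr hb, rfl⟩
    have hnxa : ¬ G.Adj x a.val := (cross hne hx haval).1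
    have hnxb : ¬ G.Adj x b.val := (cross hne hx hbval).1
    have hGadj : G.Adj a.val b.val := h
    have h2 : G.edist a.val x ≤ 2 := by
      calc G.edist a.val x ≤ G.edist a.val z + G.edist z x := G.edist_triangle
        _ ≤ 1 + 1 := add_le_add (le_of_eq (edist_eq_one_iff_adj.mpr haz))
            (le_of_eq (edist_eq_one_iff_adj.mpr hxz.symm))
        _ = 2 := by norm_num
    exact ih hb (step G a.2 h2 hGadj hnxa hnxb)

lemma compNear_refl (c : (G.induce (doubling G)ᶜ).ConnectedComponent) : compNear G c c := by
  obtain ⟨v, hv⟩ := c.exists_rep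
  have hmem : v.val ∈ compSupp G c :=
    ⟨v, ConnectedComponent.mem_supp_iff _ _ |>.mpr hv, rfl⟩
  refine ⟨v.val, ⟨v.val, hmem, ?_⟩, ⟨v.val, hmem, ?_⟩⟩ <;>
    simp [edist_self]

/-- Extract, from a nearness witness between distinct components, a pair of vertices with a
common neighbor. -/
lemma common_of_near {c d : (G.induce (doubling G)ᶜ).ConnectedComponent} (hne : c ≠ d)
    (h : compNear G c d) :
    ∃ x y z, x ∈ compSupp G c ∧ y ∈ compSupp G d ∧ G.Adj x z ∧ G.Adj y z := by
  obtain ⟨w, ⟨x, hxc, hxw⟩, ⟨y, hyd, hyw⟩⟩ := h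
  have hcr := cross hne hxc hyd
  rcases edist_le_one_cases G hxw with rfl | hxadj
  · rcases edist_le_one_cases G hyw with rfl | hyadj
    · exact absurd rfl hcr.2
    · exact absurd hyadj.symm hcr.1
  · rcases edist_le_one_cases G hyw with rfl | hyadj
    · exact absurd hxadj hcr.1
    · exact ⟨x, y, w, hxc, hyd, hxadj, hyadj⟩

end Aux

/-- The relation `X_i ∼ X_j ↔ N(X_i) ∩ N(X_j) ≠ ∅` on the components of `G - Z`
is an equivalence relation. -/
theorem stmt_3 {V : Type*} [Fintype V] (G : SimpleGraph V) [DecidableRel G.Adj]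
    (hG : G.Connected) :
    Equivalence (compNear G) := by
  refine ⟨compNear_refl, ?_, ?_⟩
  · rintro c d ⟨w, h1, h2⟩
    exact ⟨w, h2, h1⟩
  · rintro c d e hcd hde
    by_cases hcd' : c = d
    · subst hcd'; exact hde
    by_cases hde' : d = e
    · subst hde'; exact hcd
    by_cases hce : c = e
    · subst hce; exact compNear_refl c
    -- extract common neighbors
    obtain ⟨x, y, z₀, hxc, hyd, hxz₀, hyz₀⟩ := common_of_near hcd' hcd
    obtain ⟨y', u, z₂, hy'd, hue, hy'z₂, huz₂⟩ := common_of_near hde' hde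
    -- walk from y to y' inside d, propagating a common neighbor with x
    obtain ⟨yp, hyp, rfl⟩ := hyd
    obtain ⟨yq, hyq, rfl⟩ := hy'd
    rw [ConnectedComponent.mem_supp_iff] at hyp hyq
    have hreach : (G.induce (doubling G)ᶜ).Reachable yp yq :=
      ConnectedComponent.eq.mp (hyp.trans hyq.symm)
    obtain ⟨p⟩ := hreach
    obtain ⟨z₁, hxz₁, hy'z₁⟩ := along hcd' hxc p hyp ⟨z₀, hxz₀, hyz₀⟩
    -- final counting at y'
    have hy'mem : yq.val ∈ compSupp G d :=
      ⟨yq, ConnectedComponent.mem_supp_iff _ _ |>.mpr hyq, rfl⟩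
    have hnxy' : ¬ G.Adj x yq.val := (cross hcd' hxc hy'mem).1
    have hnuy' : ¬ G.Adj u yq.val := by
      have hueT : u ∈ compSupp G e := hue
      exact (cross (fun h => hde' h.symm) hueT hy'mem).1
    have h2x : G.edist yq.val x ≤ 2 := by
      calc G.edist yq.val x ≤ G.edist yq.val z₁ + G.edist z₁ x := G.edist_triangle
        _ ≤ 1 + 1 := add_le_add (le_of_eq (edist_eq_one_iff_adj.mpr hy'z₁))
            (le_of_eq (edist_eq_one_iff_adj.mpr hxz₁.symm))
        _ = 2 := by norm_num
    have h2u : G.edist yq.val u ≤ 2 := by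
      calc G.edist yq.val u ≤ G.edist yq.val z₂ + G.edist z₂ u := G.edist_triangle
        _ ≤ 1 + 1 := add_le_add (le_of_eq (edist_eq_one_iff_adj.mpr hy'z₂))
            (le_of_eq (edist_eq_one_iff_adj.mpr huz₂.symm))
        _ = 2 := by norm_num
    obtain ⟨z, hz1, hz2⟩ := key_inter G (nondoubling_card G yq.2)
      (nbr_subset G h2x hnxy') (nbr_subset G h2u hnuy')
      (minDeg_le_ncard G x) (minDeg_le_ncard G u)
    have hadjxz : G.Adj x z := hz1
    have hadjuz : G.Adj u z := hz2
    exact ⟨z, ⟨x, hxc, le_of_eq (edist_eq_one_iff_adj.mpr hadjxz)⟩,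
      ⟨u, hue, le_of_eq (edist_eq_one_iff_adj.mpr hadjuz)⟩⟩
end

section
/- Let G be a finite simple connected graph, Z its set of doubling vertices, and let Y be the union of the vertex sets of an equivalence class (under the relation X_i ∼ X_j iff N(X_i) ∩ N(X_j) ≠ ∅) of components of G − Z. Then the subgraph of G² induced by N(Y) is a clique, i.e., any two distinct vertices of N(Y) are at distance at most 2 in G. -/
open SimpleGraph

section Aux

variable {V : Type*} [Fintype V] (G : SimpleGraph V) [DecidableRel G.Adj]

/-- Membership in a closed neighborhood gives `edist ≤ 1`. -/
lemma aux_edist_le_one {a u : V} (h : u ∈ insert a (G.neighborSet a)) : G.edist a u ≤ 1 := by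
  rcases h with h | h
  · subst h; simp [edist_self]
  · exact le_of_eq (edist_eq_one_iff_adj.mpr h)

/-- Key counting lemma: a non-doubling vertex cannot be within distance 2 of two
vertices that are at distance more than 2 from each other. -/
lemma key_lemma {w a b : V} (hw : w ∉ doubling G) (ha : G.edist w a ≤ 2)
    (hb : G.edist w b ≤ 2) (hab : ¬ G.edist a b ≤ 2) : False := by
  classical
  set A : Set V := insert a (G.neighborSet a) with hA
  set B : Set V := insert b (G.neighborSet b) with hB
  have hdisj : Disjoint A B := by
    rw [Set.disjoint_left]
    intro u huA huB
    apply hab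
    calc G.edist a b ≤ G.edist a u + G.edist u b := G.edist_triangle
    _ ≤ 1 + 1 := add_le_add (aux_edist_le_one G huA)
        (by rw [edist_comm]; exact aux_edist_le_one G huB)
    _ = 2 := by norm_num
  have hsub : (A ∪ B) \ {w} ⊆ (cube G).neighborSet w := by
    rintro u ⟨hu, hne⟩
    have h3 : G.edist w u ≤ 3 := by
      rcases hu with hu | hu
      · calc G.edist w u ≤ G.edist w a + G.edist a u := G.edist_triangle
        _ ≤ 2 + 1 := add_le_add ha (aux_edist_le_one G hu)
        _ = 3 := by norm_num
      · calc G.edist w u ≤ G.edist w b + G.edist b u := G.edist_triangle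
        _ ≤ 2 + 1 := add_le_add hb (aux_edist_le_one G hu)
        _ = 3 := by norm_num
    exact ⟨fun h => hne (h ▸ rfl), h3⟩
  have hAcard : G.minDegree + 1 ≤ A.ncard := by
    rw [hA, Set.ncard_insert_of_notMem (by simp) (Set.toFinite _)]
    have : (G.neighborSet a).ncard = G.degree a := by
      rw [Set.ncard_eq_toFinset_card', Set.toFinset_card, card_neighborSet_eq_degree]
    rw [this]
    exact add_le_add_left (G.minDegree_le_degree a) 1
  have hBcard : G.minDegree + 1 ≤ B.ncard := by
    rw [hB, Set.ncard_insert_of_notMem (by simp) (Set.toFinite _)]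
    have : (G.neighborSet b).ncard = G.degree b := by
      rw [Set.ncard_eq_toFinset_card', Set.toFinset_card, card_neighborSet_eq_degree]
    rw [this]
    exact add_le_add_left (G.minDegree_le_degree b) 1
  have hunion : (A ∪ B).ncard = A.ncard + B.ncard :=
    Set.ncard_union_eq hdisj (Set.toFinite _) (Set.toFinite _)
  have hdiff : (A ∪ B).ncard ≤ ((A ∪ B) \ {w}).ncard + 1 := by
    have hsub2 : A ∪ B ⊆ insert w ((A ∪ B) \ {w}) := by
      intro u hu
      by_cases h : u = w
      · exact h ▸ Set.mem_insert _ _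
      · exact Set.mem_insert_of_mem _ ⟨hu, h⟩
    calc (A ∪ B).ncard ≤ (insert w ((A ∪ B) \ {w})).ncard :=
          Set.ncard_le_ncard hsub2 (Set.toFinite _)
    _ ≤ ((A ∪ B) \ {w}).ncard + 1 := Set.ncard_insert_le _ _
  have hle : ((A ∪ B) \ {w}).ncard ≤ ((cube G).neighborSet w).ncard :=
    Set.ncard_le_ncard hsub (Set.toFinite _)
  have hlt : ((cube G).neighborSet w).ncard < 2 * G.minDegree := by
    by_contra h
    exact hw (le_of_not_gt h)
  omega

/-- Members of a component support are non-doubling. -/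
lemma compSupp_nondoubling {c : (G.induce (doubling G)ᶜ).ConnectedComponent}
    {x : V} (hx : x ∈ compSupp G c) : x ∉ doubling G := by
  obtain ⟨x', _, rfl⟩ := hx
  exact x'.2

/-- A step between non-doubling vertices at distance at most 2. -/
def Step (x z : V) : Prop := x ∉ doubling G ∧ z ∉ doubling G ∧ G.edist x z ≤ 2

lemma chain_of_walk : ∀ {a b : ↥(doubling G)ᶜ}, (G.induce (doubling G)ᶜ).Walk a b →
    Relation.ReflTransGen (Step G) a.1 b.1 := by
  intro a b p
  induction p with
  | nil => exact Relation.ReflTransGen.refl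
  | @cons x y z h p ih =>
    refine Relation.ReflTransGen.head ⟨x.2, y.2, ?_⟩ ih
    have hadj : G.Adj x.1 y.1 := h
    calc G.edist x.1 y.1 = 1 := edist_eq_one_iff_adj.mpr hadj
    _ ≤ 2 := by norm_num

lemma chain_comp {c : (G.induce (doubling G)ᶜ).ConnectedComponent}
    {x z : V} (hx : x ∈ compSupp G c) (hz : z ∈ compSupp G c) :
    Relation.ReflTransGen (Step G) x z := by
  obtain ⟨x', hx', rfl⟩ := hx
  obtain ⟨z', hz', rfl⟩ := hz
  rw [ConnectedComponent.mem_supp_iff] at hx' hz'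
  have hr : (G.induce (doubling G)ᶜ).Reachable x' z' :=
    ConnectedComponent.exact (hx'.trans hz'.symm)
  exact hr.elim fun p => chain_of_walk G p

lemma step_symm {x z : V} (h : Step G x z) : Step G z x :=
  ⟨h.2.1, h.1, by rw [edist_comm]; exact h.2.2⟩

lemma chain_near {c d : (G.induce (doubling G)ᶜ).ConnectedComponent}
    (h : compNear G c d) : ∃ p ∈ compSupp G c, ∃ q ∈ compSupp G d, Step G q p := by
  obtain ⟨m, ⟨p, hpC, hpm⟩, ⟨q, hqD, hqm⟩⟩ := h
  refine ⟨p, hpC, q, hqD, ?_⟩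
  refine ⟨compSupp_nondoubling G hqD, compSupp_nondoubling G hpC, ?_⟩
  calc G.edist q p ≤ G.edist q m + G.edist m p := G.edist_triangle
  _ ≤ 1 + 1 := add_le_add hqm (by rw [edist_comm]; exact hpm)
  _ = 2 := by norm_num

lemma chain_class {c : (G.induce (doubling G)ᶜ).ConnectedComponent}
    {y y' : V} (hy : y ∈ classUnion G c) (hy' : y' ∈ classUnion G c) :
    Relation.ReflTransGen (Step G) y y' := by
  simp only [classUnion, Set.mem_iUnion, Set.mem_setOf_eq] at hy hy'
  obtain ⟨d, hcd, hyd⟩ := hy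
  obtain ⟨d', hcd', hyd'⟩ := hy'
  obtain ⟨p, hpC, q, hqD, hqp⟩ := chain_near G hcd
  obtain ⟨p', hp'C, q', hq'D, hq'p'⟩ := chain_near G hcd'
  exact ((chain_comp G hyd hqD).trans ((Relation.ReflTransGen.single hqp).trans
    ((chain_comp G hpC hp'C).trans ((Relation.ReflTransGen.single
      (step_symm G hq'p')).trans (chain_comp G hq'D hyd')))))

lemma classUnion_nondoubling {c : (G.induce (doubling G)ᶜ).ConnectedComponent}
    {y : V} (hy : y ∈ classUnion G c) : y ∉ doubling G := by
  simp only [classUnion, Set.mem_iUnion, Set.mem_setOf_eq] at hy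
  obtain ⟨d, _, hyd⟩ := hy
  exact compSupp_nondoubling G hyd

end Aux

/-- If `Y` is the union of an equivalence class of components of `G - Z`, then `N(Y)`
induces a clique in `G²`: any two distinct vertices of `N(Y)` are at distance `≤ 2`. -/
theorem stmt_4 {V : Type*} [Fintype V] (G : SimpleGraph V) [DecidableRel G.Adj]
    (hG : G.Connected) (c : (G.induce (doubling G)ᶜ).ConnectedComponent)
    {v v' : V} (hv : v ∈ nbhd G 1 (classUnion G c)) (hv' : v' ∈ nbhd G 1 (classUnion G c))
    (hne : v ≠ v') :
    G.edist v v' ≤ 2 := by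
  by_contra hcon
  obtain ⟨y, hyY, hyv⟩ := hv
  obtain ⟨y', hy'Y, hy'v'⟩ := hv'
  have hchain := chain_class G hyY hy'Y
  have inv : ∀ z, Relation.ReflTransGen (Step G) y z → G.edist v z ≤ 2 := by
    intro z hz
    induction hz with
    | refl =>
      rw [edist_comm]
      exact le_trans hyv one_le_two
    | tail _ hstep ih =>
      by_contra h2
      exact key_lemma G hstep.1 (by rw [edist_comm]; exact ih) hstep.2.2 h2
  have hvy' := inv y' hchain
  exact key_lemma G (classUnion_nondoubling G hy'Y) (by rw [edist_comm]; exact hvy')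
    (le_trans hy'v' one_le_two) hcon
end

section
/- Let G be a finite simple connected graph of diameter at least 3, Z its set of doubling vertices, and Y the union of an equivalence class of components of G − Z under the relation N(X_i) ∩ N(X_j) ≠ ∅. Then every vertex v ∈ Y satisfies deg_{G³}(v) ≥ δ(G) + |Y|. -/
open SimpleGraph

section helpers
variable {V : Type*} {G : SimpleGraph V} {u v w x a : V}

lemma mem_closed_iff : x ∈ insert u (G.neighborSet u) ↔ G.edist u x ≤ 1 := by
  constructor
  · rintro (rfl | hx)
    · simp [edist_self]
    · exact (edist_eq_one_iff_adj.mpr hx).le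
  · intro h
    rcases eq_or_ne u x with rfl | hne
    · exact Set.mem_insert _ _
    · exact Set.mem_insert_of_mem _ (edist_eq_one_iff_adj.mp
        (le_antisymm h (Order.one_le_iff_pos.mpr (G.edist_pos_of_ne hne))))

lemma edist_getVert_le (p : G.Walk u v) (i : ℕ) : G.edist u (p.getVert i) ≤ i := by
  induction p generalizing i with
  | nil => simp [Walk.getVert, edist_self]
  | @cons a b c h q ih =>
    cases i with
    | zero => simp [Walk.getVert_zero, edist_self]
    | succ n =>
      rw [Walk.getVert_cons_succ]
      calc G.edist a (q.getVert n) ≤ G.edist a b + G.edist b (q.getVert n) :=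
            G.edist_triangle
        _ ≤ 1 + n := add_le_add (edist_eq_one_iff_adj.mpr h).le (ih n)
        _ = (n + 1 : ℕ) := by push_cast; ring

lemma edist_getVert_right_le (p : G.Walk u v) (i : ℕ) :
    G.edist (p.getVert i) v ≤ (p.length - i : ℕ) := by
  induction p generalizing i with
  | nil => simp [Walk.getVert, edist_self]
  | @cons a b c h q ih =>
    cases i with
    | zero =>
      simp only [Walk.getVert_zero]
      calc G.edist a c ≤ (q.cons h).length := edist_le _
        _ = ((q.cons h).length - 0 : ℕ) := by simp
    | succ n =>
      rw [Walk.getVert_cons_succ]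
      calc G.edist (q.getVert n) c ≤ (q.length - n : ℕ) := ih n
        _ ≤ ((q.cons h).length - (n+1) : ℕ) := by simp [Walk.length_cons]

end helpers

section fin
variable {V : Type*} [Fintype V] {G : SimpleGraph V} [DecidableRel G.Adj]

lemma ncard_closed (u : V) : (insert u (G.neighborSet u)).ncard = G.degree u + 1 := by
  rw [Set.ncard_insert_of_notMem (by simp)]
  rw [← Nat.card_coe_set_eq, Nat.card_eq_fintype_card, card_neighborSet_eq_degree]

lemma key_s5 {a : V} (ha : a ∉ doubling G) {u w : V}
    (hu : G.edist a u ≤ 2) (hw : G.edist a w ≤ 2) : G.edist u w ≤ 2 := by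
  by_contra hc
  have h3 : 3 ≤ G.edist u w := by
    have := Order.add_one_le_of_lt (not_le.mp hc)
    norm_num at this; exact this
  have : Nonempty V := ⟨a⟩
  set A := insert u (G.neighborSet u) with hA
  set B := insert w (G.neighborSet w) with hB
  have hdisj : Disjoint A B := by
    rw [Set.disjoint_left]
    intro x hxA hxB
    have h1 : G.edist u x ≤ 1 := mem_closed_iff.mp hxA
    have h2 : G.edist w x ≤ 1 := mem_closed_iff.mp hxB
    have : G.edist u w ≤ 2 := by
      calc G.edist u w ≤ G.edist u x + G.edist x w := G.edist_triangle
        _ ≤ 1 + 1 := add_le_add h1 (edist_comm ▸ h2)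
        _ = 2 := by norm_num
    exact absurd (h3.trans this) (by norm_num)
  have hsub : (A ∪ B) \ {a} ⊆ (cube G).neighborSet a := by
    rintro x ⟨hx, hxa⟩
    have hd : G.edist a x ≤ 3 := by
      rcases hx with hx | hx
      · calc G.edist a x ≤ G.edist a u + G.edist u x := G.edist_triangle
          _ ≤ 2 + 1 := add_le_add hu (mem_closed_iff.mp hx)
          _ = 3 := by norm_num
      · calc G.edist a x ≤ G.edist a w + G.edist w x := G.edist_triangle
          _ ≤ 2 + 1 := add_le_add hw (mem_closed_iff.mp hx)
          _ = 3 := by norm_num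
    exact ⟨fun h => hxa (by simp [h.symm]), hd⟩
  have hcard : 2 * G.minDegree + 2 ≤ (A ∪ B).ncard := by
    rw [Set.ncard_union_eq hdisj (Set.toFinite _) (Set.toFinite _), ncard_closed, ncard_closed]
    have h1 := G.minDegree_le_degree u
    have h2 := G.minDegree_le_degree w
    omega
  have hle : (A ∪ B).ncard ≤ ((A ∪ B) \ {a}).ncard + 1 := by
    calc (A ∪ B).ncard ≤ (((A ∪ B) \ {a}) ∪ {a}).ncard :=
          Set.ncard_le_ncard (fun x hx => by
            by_cases hxa : x = a
            · exact Or.inr (by simp [hxa])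
            · exact Or.inl ⟨hx, by simp [hxa]⟩) (Set.toFinite _)
      _ ≤ ((A ∪ B) \ {a}).ncard + ({a} : Set V).ncard := Set.ncard_union_le _ _
      _ = ((A ∪ B) \ {a}).ncard + 1 := by rw [Set.ncard_singleton]
  have hfinal : 2 * G.minDegree + 1 ≤ ((cube G).neighborSet a).ncard := by
    have := Set.ncard_le_ncard hsub (Set.toFinite _)
    omega
  exact ha (le_trans (by omega) hfinal)

end fin

section comps
variable {V : Type*} [Fintype V] {G : SimpleGraph V} [DecidableRel G.Adj]

lemma walkA {x y : ↥(doubling G)ᶜ} (p : (G.induce (doubling G)ᶜ).Walk x y) :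
    G.edist x.val y.val ≤ 2 := by
  induction p with
  | nil => simp [edist_self]
  | @cons a b c hadj q ih =>
    have hGadj : G.Adj a.val b.val := hadj
    exact key_s5 b.prop ((edist_eq_one_iff_adj.mpr hGadj.symm).le.trans one_le_two) ih

lemma stepA {d : (G.induce (doubling G)ᶜ).ConnectedComponent}
    {x y : V} (hx : x ∈ compSupp G d) (hy : y ∈ compSupp G d) : G.edist x y ≤ 2 := by
  obtain ⟨a, ha, rfl⟩ := hx
  obtain ⟨b, hb, rfl⟩ := hy
  rw [ConnectedComponent.mem_supp_iff] at ha hb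
  obtain ⟨p⟩ := ConnectedComponent.exact (ha.trans hb.symm)
  exact walkA p

lemma mem_compSupp_not_doubling {d : (G.induce (doubling G)ᶜ).ConnectedComponent}
    {x : V} (hx : x ∈ compSupp G d) : x ∉ doubling G := by
  obtain ⟨a, _, rfl⟩ := hx; exact a.prop

lemma stepB {d : (G.induce (doubling G)ᶜ).ConnectedComponent}
    {x w : V} (hx : x ∈ compSupp G d) (hw : w ∈ nbhd G 1 (compSupp G d)) :
    G.edist x w ≤ 2 := by
  obtain ⟨x', hx', hx'w⟩ := hw
  exact key_s5 (mem_compSupp_not_doubling hx') (edist_comm ▸ stepA hx hx')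
    (hx'w.trans one_le_two)

lemma stepC {c d : (G.induce (doubling G)ᶜ).ConnectedComponent} (hcd : compNear G c d)
    {v z : V} (hv : v ∈ compSupp G d) (hz : z ∈ compSupp G c) : G.edist v z ≤ 2 := by
  obtain ⟨ww, hwc, hwd⟩ := hcd
  obtain ⟨x', hx', hx'w⟩ := hwd
  obtain ⟨z', hz', hz'w⟩ := hwc
  have h1 : G.edist x' v ≤ 2 := stepA hx' hv
  have h2 : G.edist x' z' ≤ 2 := by
    calc G.edist x' z' ≤ G.edist x' ww + G.edist ww z' := G.edist_triangle
      _ ≤ 1 + 1 := add_le_add hx'w (edist_comm ▸ hz'w)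
      _ = 2 := by norm_num
  have h3 : G.edist v z' ≤ 2 := key_s5 (mem_compSupp_not_doubling hx') h1 h2
  exact key_s5 (mem_compSupp_not_doubling hz') (edist_comm ▸ h3) (stepA hz' hz)

lemma stepD {c : (G.induce (doubling G)ᶜ).ConnectedComponent}
    {v y : V} (hv : v ∈ classUnion G c) (hy : y ∈ classUnion G c) : G.edist v y ≤ 2 := by
  simp only [classUnion, Set.mem_iUnion, Set.mem_setOf_eq, exists_prop] at hv hy
  obtain ⟨d, hcd, hvd⟩ := hv
  obtain ⟨e, hce, hye⟩ := hy
  obtain ⟨x0⟩ := c.exists_rep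
  have hx0 : x0.val ∈ compSupp G c := ⟨x0, by rw [ConnectedComponent.mem_supp_iff]; exact ‹_›, rfl⟩
  have h1 : G.edist v x0.val ≤ 2 := stepC hcd hvd hx0
  have h2 : G.edist y x0.val ≤ 2 := stepC hce hye hx0
  exact key_s5 x0.prop (edist_comm ▸ h1) (edist_comm ▸ h2)

lemma mem_classUnion_not_doubling {c : (G.induce (doubling G)ᶜ).ConnectedComponent}
    {x : V} (hx : x ∈ classUnion G c) : x ∉ doubling G := by
  simp only [classUnion, Set.mem_iUnion, Set.mem_setOf_eq, exists_prop] at hx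
  obtain ⟨d, _, hxd⟩ := hx
  exact mem_compSupp_not_doubling hxd

end comps

/-- If `G` has diameter `≥ 3` and `Y` is the union of an equivalence class of components of
`G - Z`, then every `v ∈ Y` has `deg_{G³}(v) ≥ δ(G) + |Y|`. -/
theorem stmt_5 {V : Type*} [Fintype V] (G : SimpleGraph V) [DecidableRel G.Adj]
    (hG : G.Connected) (hdiam : ∃ u w : V, 3 ≤ G.edist u w)
    (c : (G.induce (doubling G)ᶜ).ConnectedComponent)
    {v : V} (hv : v ∈ classUnion G c) :
    G.minDegree + (classUnion G c).ncard ≤ ((cube G).neighborSet v).ncard := by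
  have : Nonempty V := ⟨v⟩
  set Y := classUnion G c with hYdef
  have hvZ : v ∉ doubling G := mem_classUnion_not_doubling hv
  have hY2 : ∀ y ∈ Y, G.edist v y ≤ 2 := fun y hy => stepD hv hy
  -- find w0 with edist v w0 ≥ 3
  obtain ⟨u0, w0', hd⟩ := hdiam
  have hw0 : ∃ w0 : V, 3 ≤ G.edist v w0 := by
    by_contra hc
    push_neg at hc
    have hle : ∀ x : V, G.edist v x ≤ 2 := by
      intro x
      have := hc x
      have h2 : G.edist v x < 2 + 1 := by norm_num; exact this
      exact (ENat.lt_add_one_iff (by norm_num)).mp h2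
    exact absurd (key_s5 hvZ (hle u0) (hle w0')) (fun h => by
      have := hd.trans h; norm_num at this)
  obtain ⟨w0, hw0⟩ := hw0
  obtain ⟨P, hP⟩ := (hG v w0).exists_walk_length_eq_edist
  have hL3 : 3 ≤ P.length := by
    have : ((3 : ℕ) : ℕ∞) ≤ (P.length : ℕ∞) := by rw [hP]; exact_mod_cast hw0
    exact_mod_cast this
  set p := P.getVert 2 with hpdef
  set w := P.getVert 3 with hwdef
  have hvp : G.edist v p ≤ 2 := by simpa using edist_getVert_le P 2
  have hpw : G.Adj p w := P.adj_getVert_succ (by omega)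
  have hvw3 : 3 ≤ G.edist v w := by
    by_contra hc
    have hvw2 : G.edist v w ≤ 2 := by
      have h2 : G.edist v w < 2 + 1 := by norm_num; exact not_le.mp hc
      exact (ENat.lt_add_one_iff (by norm_num)).mp h2
    have hww0 : G.edist w w0 ≤ (P.length - 3 : ℕ) := edist_getVert_right_le P 3
    have : (P.length : ℕ∞) ≤ 2 + (P.length - 3 : ℕ) := by
      calc (P.length : ℕ∞) = G.edist v w0 := hP
        _ ≤ G.edist v w + G.edist w w0 := G.edist_triangle
        _ ≤ 2 + (P.length - 3 : ℕ) := add_le_add hvw2 hww0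
    have h2 : (P.length : ℕ∞) ≤ ((2 + (P.length - 3) : ℕ) : ℕ∞) := by
      push_cast; exact this
    have := Nat.cast_le.mp h2
    omega
  -- N[p] disjoint from Y and from {v}, inside cube-neighborhood of v
  set Np := insert p (G.neighborSet p) with hNp
  have hNpsub : Np ⊆ (cube G).neighborSet v := by
    intro x hx
    have hpx : G.edist p x ≤ 1 := mem_closed_iff.mp hx
    have hvx : G.edist v x ≤ 3 := by
      calc G.edist v x ≤ G.edist v p + G.edist p x := G.edist_triangle
        _ ≤ 2 + 1 := add_le_add hvp hpx
        _ = 3 := by norm_num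
    have hne : v ≠ x := by
      rintro rfl
      have hvp1 : G.edist v p ≤ 1 := le_trans (le_of_eq (SimpleGraph.edist_comm)) hpx
      have : G.edist v w ≤ 2 := by
        calc G.edist v w ≤ G.edist v p + G.edist p w := G.edist_triangle
          _ ≤ 1 + 1 := add_le_add hvp1 (edist_eq_one_iff_adj.mpr hpw).le
          _ = 2 := by norm_num
      have := hvw3.trans this; norm_num at this
    exact ⟨hne, hvx⟩
  have hNpY : Disjoint Y Np := by
    rw [Set.disjoint_left]
    intro y hyY hyNp
    have hpy : G.edist p y ≤ 1 := mem_closed_iff.mp hyNp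
    have hyv : G.edist y v ≤ 2 := le_trans (le_of_eq (SimpleGraph.edist_comm)) (hY2 y hyY)
    have hyw : G.edist y w ≤ 2 := by
      calc G.edist y w ≤ G.edist y p + G.edist p w := G.edist_triangle
        _ ≤ 1 + 1 := add_le_add (le_trans (le_of_eq (SimpleGraph.edist_comm)) hpy) (edist_eq_one_iff_adj.mpr hpw).le
        _ = 2 := by norm_num
    have := hvw3.trans (key_s5 (mem_classUnion_not_doubling hyY) hyv hyw)
    norm_num at this
  have hYsub : Y \ {v} ⊆ (cube G).neighborSet v := by
    rintro y ⟨hyY, hyv⟩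
    exact ⟨fun h => hyv (by simp [h.symm]), (hY2 y hyY).trans (by norm_num)⟩
  have hsub : (Y \ {v}) ∪ Np ⊆ (cube G).neighborSet v := Set.union_subset hYsub hNpsub
  have hdisj : Disjoint (Y \ {v}) Np := hNpY.mono_left Set.diff_subset
  have hcard : ((Y \ {v}) ∪ Np).ncard = (Y \ {v}).ncard + Np.ncard :=
    Set.ncard_union_eq hdisj (Set.toFinite _) (Set.toFinite _)
  have hYcard : (Y \ {v}).ncard + 1 = Y.ncard :=
    Set.ncard_diff_singleton_add_one hv (Set.toFinite _)
  have hNpcard : Np.ncard = G.degree p + 1 := ncard_closed p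
  have hdeg := G.minDegree_le_degree p
  have hfin := Set.ncard_le_ncard hsub (Set.toFinite _)
  omega
end

section
/- If G is a finite simple connected graph with diameter at least 3, then the number of edges of G³ satisfies e(G³) ≥ (7/8)·δ(G)·|V(G)|, equivalently G³ has average degree at least (7/4)·δ(G). -/
open SimpleGraph

section AuxLemmas

open Finset

variable {V : Type*}

private lemma edist_le_one_iff' (G : SimpleGraph V) {u v : V} :
    G.edist u v ≤ 1 ↔ u = v ∨ G.Adj u v := by
  constructor
  · intro h
    rcases eq_or_ne (G.edist u v) 0 with h0 | h0
    · exact .inl (edist_eq_zero_iff.mp h0)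
    · exact .inr (edist_eq_one_iff_adj.mp
        (le_antisymm h (Order.one_le_iff_pos.mpr (pos_iff_ne_zero.mpr h0))))
  · rintro (rfl | h)
    · simp [edist_self]
    · exact le_of_eq (edist_eq_one_iff_adj.mpr h)

private lemma adj_edist_le_one (G : SimpleGraph V) {u v : V} (h : G.Adj u v) :
    G.edist u v ≤ 1 :=
  (edist_le_one_iff' G).mpr (.inr h)

private lemma walk_decomp (G : SimpleGraph V) (k : ℕ) {y v : V} (p : G.Walk y v)
    (hl : p.length ≤ k + 1) : ∃ x, G.edist v x ≤ k ∧ G.edist x y ≤ 1 := by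
  cases p with
  | nil => exact ⟨y, by simp [SimpleGraph.edist_self], by simp [SimpleGraph.edist_self]⟩
  | @cons _ w _ h q =>
      refine ⟨w, ?_, ?_⟩
      · have h1 : G.edist w v ≤ q.length := edist_le q
        have h2 : q.length ≤ k := by
          have := hl
          simp only [SimpleGraph.Walk.length_cons] at this
          omega
        rw [SimpleGraph.edist_comm]
        exact h1.trans (by exact_mod_cast Nat.cast_le.mpr h2)
      · rw [SimpleGraph.edist_comm]
        exact adj_edist_le_one G h

private lemma edist_decomp (G : SimpleGraph V) (k : ℕ) {v y : V}
    (h : G.edist v y ≤ (k : ℕ∞) + 1) : ∃ x, G.edist v x ≤ k ∧ G.edist x y ≤ 1 := by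
  have hne : G.edist v y ≠ ⊤ := by
    intro ht
    rw [ht] at h
    exact (ENat.top_ne_coe (k+1)) (le_antisymm (le_top) (by exact_mod_cast h) ▸ rfl)
  obtain ⟨p, hp⟩ := exists_walk_of_edist_ne_top hne
  have hl : p.length ≤ k + 1 := by
    have : (p.length : ℕ∞) ≤ (k : ℕ∞) + 1 := by rw [hp]; exact h
    exact_mod_cast this
  have := walk_decomp G k p.reverse (by rwa [SimpleGraph.Walk.length_reverse])
  exact this

private lemma three_le_of_not_le_two {e : ℕ∞} (h : ¬ e ≤ 2) : 3 ≤ e := by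
  rcases lt_or_ge e 3 with h3 | h3
  · exact absurd (Order.le_of_lt_add_one (by exact_mod_cast h3)) h
  · exact h3

end AuxLemmas


section MainProof

open Finset

variable {V : Type*}

private lemma cball_disjoint' [DecidableEq V] [Fintype V] (G : SimpleGraph V) {x y : V} (h : 3 ≤ G.edist x y) :
    Disjoint (Finset.univ.filter (fun u => G.edist x u ≤ 1))
      (Finset.univ.filter (fun u => G.edist y u ≤ 1)) := by
  classical
  rw [Finset.disjoint_left]
  intro a hax hay
  simp only [Finset.mem_filter, Finset.mem_univ, true_and] at hax hay
  have h2 : G.edist x y ≤ 2 := by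
    calc G.edist x y ≤ G.edist x a + G.edist a y := SimpleGraph.edist_triangle
    _ ≤ 1 + 1 := add_le_add hax (by rw [SimpleGraph.edist_comm]; exact hay)
    _ = 2 := by norm_num
  have h32 : (3 : ℕ∞) ≤ 2 := le_trans h h2
  norm_num at h32

open scoped Classical in
private noncomputable def cball' [DecidableEq V] [Fintype V] (G : SimpleGraph V) (v : V) : Finset V :=
  Finset.univ.filter (fun u => G.edist v u ≤ 1)

private lemma mem_cball' [DecidableEq V] [Fintype V] (G : SimpleGraph V) {v u : V} :
    u ∈ cball' G v ↔ G.edist v u ≤ 1 := by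
  simp [cball']

private lemma card_cball' [DecidableEq V] [Fintype V] (G : SimpleGraph V) [DecidableRel G.Adj] (v : V) :
    G.minDegree + 1 ≤ (cball' G v).card := by
  have hsub : insert v (G.neighborFinset v) ⊆ cball' G v := by
    intro u hu
    rcases Finset.mem_insert.mp hu with rfl | hu
    · exact (mem_cball' G).mpr (by simp [SimpleGraph.edist_self])
    · exact (mem_cball' G).mpr (adj_edist_le_one G ((G.mem_neighborFinset v u).mp hu))
  have h1 : (insert v (G.neighborFinset v)).card = G.degree v + 1 := by
    rw [Finset.card_insert_of_notMem (by simp), SimpleGraph.card_neighborFinset_eq_degree]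
  have h2 := Finset.card_le_card hsub
  have h3 := G.minDegree_le_degree v
  omega

private lemma cball'_disjoint [DecidableEq V] [Fintype V] (G : SimpleGraph V) {x y : V} (h : 3 ≤ G.edist x y) :
    Disjoint (cball' G x) (cball' G y) := by
  rw [Finset.disjoint_left]
  intro a hax hay
  rw [mem_cball'] at hax hay
  have h2 : G.edist x y ≤ 2 := by
    calc G.edist x y ≤ G.edist x a + G.edist a y := SimpleGraph.edist_triangle
    _ ≤ 1 + 1 := add_le_add hax (by rw [SimpleGraph.edist_comm]; exact hay)
    _ = 2 := by norm_num
  have h32 : (3 : ℕ∞) ≤ 2 := le_trans h h2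
  norm_num at h32

private lemma card_V_ge [DecidableEq V] [Fintype V] (G : SimpleGraph V) [DecidableRel G.Adj]
    (hdiam : ∃ u w : V, 3 ≤ G.edist u w) :
    2 * G.minDegree + 2 ≤ Fintype.card V := by
  obtain ⟨x, y, hxy⟩ := hdiam
  have hdisj := cball'_disjoint G hxy
  have h1 := card_cball' G x
  have h2 := card_cball' G y
  have h3 : (cball' G x ∪ cball' G y).card = (cball' G x).card + (cball' G y).card :=
    Finset.card_union_of_disjoint hdisj
  have h4 : (cball' G x ∪ cball' G y).card ≤ Fintype.card V := by
    rw [← Finset.card_univ]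
    exact Finset.card_le_univ _
  omega

private noncomputable def d3 [DecidableEq V] [Fintype V] (G : SimpleGraph V) (v : V) : ℕ :=
  ((cube G).neighborSet v).ncard

open scoped Classical in
private lemma d3_eq [DecidableEq V] [Fintype V] (G : SimpleGraph V) (v : V) :
    d3 G v = (Finset.univ.filter (fun u => v ≠ u ∧ G.edist v u ≤ 3)).card := by
  have hset : ((cube G).neighborSet v)
      = ↑(Finset.univ.filter (fun u => v ≠ u ∧ G.edist v u ≤ 3)) := by
    ext u
    simp only [Finset.coe_filter, Finset.mem_univ, true_and, Set.mem_setOf_eq]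
    exact Iff.rfl
  rw [d3, hset, Set.ncard_coe_finset]

open scoped Classical in
private lemma d3_ge [DecidableEq V] [Fintype V] (G : SimpleGraph V) {v : V} (F : Finset V)
    (hF : ∀ u ∈ F, G.edist v u ≤ 3) (hvF : v ∈ F) : F.card ≤ d3 G v + 1 := by
  rw [d3_eq]
  have hsub : F.erase v ⊆ Finset.univ.filter (fun u => v ≠ u ∧ G.edist v u ≤ 3) := by
    intro u hu
    obtain ⟨hne, huF⟩ := Finset.mem_erase.mp hu
    exact Finset.mem_filter.mpr ⟨Finset.mem_univ u, Ne.symm hne, hF u huF⟩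
  have h1 := Finset.card_le_card hsub
  rw [Finset.card_erase_of_mem hvF] at h1
  omega

private lemma lemA [DecidableEq V] [Fintype V] (G : SimpleGraph V) [DecidableRel G.Adj] {v : V}
    (hv : d3 G v < 2 * G.minDegree) {x y : V} (hx : G.edist v x ≤ 2) (hy : G.edist v y ≤ 2) :
    G.edist x y ≤ 2 := by
  by_contra hxy
  have h3 : 3 ≤ G.edist x y := three_le_of_not_le_two hxy
  have hdisj := cball'_disjoint G h3
  have hsub : ∀ u ∈ insert v (cball' G x ∪ cball' G y), G.edist v u ≤ 3 := by
    intro u hu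
    rcases Finset.mem_insert.mp hu with rfl | hu
    · simp [SimpleGraph.edist_self]
    rcases Finset.mem_union.mp hu with hu | hu
    · rw [mem_cball'] at hu
      calc G.edist v u ≤ G.edist v x + G.edist x u := SimpleGraph.edist_triangle
      _ ≤ 2 + 1 := add_le_add hx hu
      _ = 3 := by norm_num
    · rw [mem_cball'] at hu
      calc G.edist v u ≤ G.edist v y + G.edist y u := SimpleGraph.edist_triangle
      _ ≤ 2 + 1 := add_le_add hy hu
      _ = 3 := by norm_num
  have hd := d3_ge G _ hsub (Finset.mem_insert_self v _)
  have hcard : 2 * G.minDegree + 2 ≤ (cball' G x ∪ cball' G y).card := by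
    rw [Finset.card_union_of_disjoint hdisj]
    have := card_cball' G x
    have := card_cball' G y
    omega
  have hins : (cball' G x ∪ cball' G y).card ≤ (insert v (cball' G x ∪ cball' G y)).card :=
    Finset.card_le_card (Finset.subset_insert _ _)
  omega

open scoped Classical in
private noncomputable def clsF [DecidableEq V] [Fintype V] (G : SimpleGraph V) [DecidableRel G.Adj] (v : V) :
    Finset V :=
  Finset.univ.filter (fun u => d3 G u < 2 * G.minDegree ∧ G.edist v u ≤ 2)

open scoped Classical in
private noncomputable def nbF [DecidableEq V] [Fintype V] (G : SimpleGraph V) [DecidableRel G.Adj] (v : V) :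
    Finset V :=
  Finset.univ.filter (fun y => ∃ u ∈ clsF G v, G.edist u y ≤ 1)

private lemma mem_clsF [DecidableEq V] [Fintype V] (G : SimpleGraph V) [DecidableRel G.Adj] {v u : V} :
    u ∈ clsF G v ↔ d3 G u < 2 * G.minDegree ∧ G.edist v u ≤ 2 := by
  simp [clsF]

private lemma mem_nbF [DecidableEq V] [Fintype V] (G : SimpleGraph V) [DecidableRel G.Adj] {v y : V} :
    y ∈ nbF G v ↔ ∃ u, (d3 G u < 2 * G.minDegree ∧ G.edist v u ≤ 2) ∧ G.edist u y ≤ 1 := by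
  simp [nbF, clsF]

private lemma self_mem_clsF [DecidableEq V] [Fintype V] (G : SimpleGraph V) [DecidableRel G.Adj] {v : V}
    (hv : d3 G v < 2 * G.minDegree) : v ∈ clsF G v :=
  (mem_clsF G).mpr ⟨hv, by simp [SimpleGraph.edist_self]⟩

private lemma clsF_subset_nbF [DecidableEq V] [Fintype V] (G : SimpleGraph V) [DecidableRel G.Adj] (v : V) :
    clsF G v ⊆ nbF G v := by
  intro u hu
  exact (mem_nbF G).mpr ⟨u, (mem_clsF G).mp hu, by simp [SimpleGraph.edist_self]⟩

private lemma self_mem_nbF [DecidableEq V] [Fintype V] (G : SimpleGraph V) [DecidableRel G.Adj] {v : V}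
    (hv : d3 G v < 2 * G.minDegree) : v ∈ nbF G v :=
  clsF_subset_nbF G v (self_mem_clsF G hv)

private lemma exists_far [DecidableEq V] [Fintype V] (G : SimpleGraph V) [DecidableRel G.Adj]
    (hG : G.Connected) (hdiam : ∃ u w : V, 3 ≤ G.edist u w) {v : V}
    (hv : d3 G v < 2 * G.minDegree) :
    ∃ x, G.edist v x ≤ 2 ∧ x ∉ nbF G v := by
  by_contra hcon
  push_neg at hcon
  have step : ∀ y, G.edist v y ≤ 3 → G.edist v y ≤ 2 := by
    intro y hy
    obtain ⟨x, hx2, hx1⟩ := edist_decomp G 2 (by exact_mod_cast hy)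
    obtain ⟨u, ⟨huW, huv⟩, hux⟩ := (mem_nbF G).mp (hcon x hx2)
    have h1 : G.edist u v ≤ 2 := by rw [SimpleGraph.edist_comm]; exact huv
    have h2 : G.edist u y ≤ 2 := by
      calc G.edist u y ≤ G.edist u x + G.edist x y := SimpleGraph.edist_triangle
      _ ≤ 1 + 1 := add_le_add hux hx1
      _ ≤ 2 := by norm_num
    exact lemA G huW h1 h2
  have all2 : ∀ (k : ℕ), ∀ y, G.edist v y ≤ (k : ℕ∞) → G.edist v y ≤ 2 := by
    intro k
    induction k with
    | zero =>
        intro y h0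
        exact h0.trans (by norm_num)
    | succ k ih =>
        intro y hk
        obtain ⟨x, hxk, hx1⟩ := edist_decomp G k (by exact_mod_cast hk)
        have hx2 := ih x hxk
        refine step y ?_
        calc G.edist v y ≤ G.edist v x + G.edist x y := SimpleGraph.edist_triangle
        _ ≤ 2 + 1 := add_le_add hx2 hx1
        _ = 3 := by norm_num
  have huniv : ∀ y, G.edist v y ≤ 3 := by
    intro y
    have hne : G.edist v y ≠ ⊤ := edist_ne_top_iff_reachable.mpr (hG.preconnected v y)
    obtain ⟨k, hk⟩ := WithTop.ne_top_iff_exists.mp hne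
    exact (all2 k y (le_of_eq hk.symm)).trans (by norm_num)
  have hF := d3_ge G Finset.univ (fun u _ => huniv u) (Finset.mem_univ v)
  have hn := card_V_ge G hdiam
  rw [Finset.card_univ] at hF
  omega

private lemma class_bd [DecidableEq V] [Fintype V] (G : SimpleGraph V) [DecidableRel G.Adj]
    (hG : G.Connected) (hdiam : ∃ u w : V, 3 ≤ G.edist u w) {v : V}
    (hv : d3 G v < 2 * G.minDegree) :
    7 * G.minDegree * (nbF G v).card ≤ 4 * ∑ u ∈ nbF G v, d3 G u := by
  set δ := G.minDegree with hδdef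
  set a := (clsF G v).card with ha
  set b := (nbF G v \ clsF G v).card with hb
  have hUN : clsF G v ⊆ nbF G v := clsF_subset_nbF G v
  have hcard : b + a = (nbF G v).card := Finset.card_sdiff_add_card_eq_card hUN
  have hδ1 : δ + 1 ≤ (nbF G v).card := by
    have hsub : cball' G v ⊆ nbF G v := by
      intro u hu
      exact (mem_nbF G).mpr ⟨v, ⟨hv, by simp [SimpleGraph.edist_self]⟩, (mem_cball' G).mp hu⟩
    exact le_trans (card_cball' G v) (Finset.card_le_card hsub)
  obtain ⟨x, hx2, hxN⟩ := exists_far G hG hdiam hv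
  have hUd3 : ∀ u' ∈ clsF G v, δ + a ≤ d3 G u' := by
    intro u' hu'
    obtain ⟨hu'W, hvu'⟩ := (mem_clsF G).mp hu'
    have hdisjUC : Disjoint (clsF G v) (cball' G x) := by
      rw [Finset.disjoint_left]
      intro w hwU hwC
      refine hxN ((mem_nbF G).mpr ⟨w, (mem_clsF G).mp hwU, ?_⟩)
      rw [SimpleGraph.edist_comm]
      exact (mem_cball' G).mp hwC
    have hFsub : ∀ u'' ∈ clsF G v ∪ cball' G x, G.edist u' u'' ≤ 3 := by
      intro u'' hu''
      rcases Finset.mem_union.mp hu'' with hu'' | hu''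
      · obtain ⟨_, hvu''⟩ := (mem_clsF G).mp hu''
        exact (lemA G hv hvu' hvu'').trans (by norm_num)
      · have hu'x : G.edist u' x ≤ 2 := lemA G hv hvu' hx2
        calc G.edist u' u'' ≤ G.edist u' x + G.edist x u'' := SimpleGraph.edist_triangle
        _ ≤ 2 + 1 := add_le_add hu'x ((mem_cball' G).mp hu'')
        _ = 3 := by norm_num
    have hd := d3_ge G _ hFsub (Finset.mem_union_left _ hu')
    have hcardF : (clsF G v ∪ cball' G x).card = a + (cball' G x).card :=
      Finset.card_union_of_disjoint hdisjUC
    have := card_cball' G x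
    omega
  have hBd3 : ∀ z ∈ nbF G v \ clsF G v, 2 * δ ≤ d3 G z := by
    intro z hz
    obtain ⟨hzN, hzU⟩ := Finset.mem_sdiff.mp hz
    by_contra hzW
    push_neg at hzW
    obtain ⟨u, ⟨huW, hvu⟩, huz⟩ := (mem_nbF G).mp hzN
    have h1 : G.edist u v ≤ 2 := by rw [SimpleGraph.edist_comm]; exact hvu
    have h2 : G.edist u z ≤ 2 := huz.trans (by norm_num)
    have hvz : G.edist v z ≤ 2 := lemA G huW h1 h2
    exact hzU ((mem_clsF G).mpr ⟨hzW, hvz⟩)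
  have hS1 : a * (δ + a) ≤ ∑ u ∈ clsF G v, d3 G u := by
    have := Finset.card_nsmul_le_sum (clsF G v) (d3 G) (δ + a) hUd3
    simpa [smul_eq_mul] using this
  have hS2 : b * (2 * δ) ≤ ∑ u ∈ nbF G v \ clsF G v, d3 G u := by
    have := Finset.card_nsmul_le_sum (nbF G v \ clsF G v) (d3 G) (2 * δ) hBd3
    simpa [smul_eq_mul] using this
  have hsplit : ∑ u ∈ nbF G v \ clsF G v, d3 G u + ∑ u ∈ clsF G v, d3 G u
      = ∑ u ∈ nbF G v, d3 G u := Finset.sum_sdiff hUN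
  have hkey : 7 * δ * (b + a) ≤ 4 * (b * (2 * δ) + a * (δ + a)) := by
    have hba : δ + 1 ≤ b + a := by omega
    rcases le_or_gt δ a with h | h
    · nlinarith
    · zify
      have hba' : (δ : ℤ) + 1 ≤ (b : ℤ) + (a : ℤ) := by exact_mod_cast hba
      nlinarith [sq_nonneg ((δ : ℤ) - 2 * a), mul_le_mul_of_nonneg_left hba'
        (by positivity : (0 : ℤ) ≤ (δ : ℤ))]
  calc 7 * δ * (nbF G v).card = 7 * δ * (b + a) := by rw [hcard]
  _ ≤ 4 * (b * (2 * δ) + a * (δ + a)) := hkey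
  _ ≤ 4 * (∑ u ∈ nbF G v \ clsF G v, d3 G u + ∑ u ∈ clsF G v, d3 G u) := by
      have := add_le_add hS2 hS1
      omega
  _ = 4 * ∑ u ∈ nbF G v, d3 G u := by rw [hsplit]

private lemma main_count [DecidableEq V] [Fintype V] (G : SimpleGraph V) [DecidableRel G.Adj]
    (hG : G.Connected) (hdiam : ∃ u w : V, 3 ≤ G.edist u w) :
    ∀ S : Finset V, (∀ v ∈ S, d3 G v < 2 * G.minDegree → nbF G v ⊆ S) →
      7 * G.minDegree * S.card ≤ 4 * ∑ u ∈ S, d3 G u := by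
  intro S
  induction S using Finset.strongInductionOn with
  | _ S ih =>
    intro hclosed
    by_cases hw : ∃ v ∈ S, d3 G v < 2 * G.minDegree
    · obtain ⟨v, hvS, hv⟩ := hw
      have hNS : nbF G v ⊆ S := hclosed v hvS hv
      have hssub : S \ nbF G v ⊂ S :=
        Finset.sdiff_ssubset hNS ⟨v, self_mem_nbF G hv⟩
      have hTclosed : ∀ w ∈ S \ nbF G v, d3 G w < 2 * G.minDegree →
          nbF G w ⊆ S \ nbF G v := by
        intro w hwT hw y hy
        have hwS : w ∈ S := (Finset.mem_sdiff.mp hwT).1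
        have hwNv : w ∉ nbF G v := (Finset.mem_sdiff.mp hwT).2
        refine Finset.mem_sdiff.mpr ⟨hclosed w hwS hw hy, fun hyNv => ?_⟩
        obtain ⟨u₁, ⟨hu₁W, hu₁w⟩, hu₁y⟩ := (mem_nbF G).mp hy
        obtain ⟨u₂, ⟨hu₂W, hu₂v⟩, hu₂y⟩ := (mem_nbF G).mp hyNv
        have h12 : G.edist u₁ u₂ ≤ 2 := by
          calc G.edist u₁ u₂ ≤ G.edist u₁ y + G.edist y u₂ := SimpleGraph.edist_triangle
          _ ≤ 1 + 1 := add_le_add hu₁y (by rw [SimpleGraph.edist_comm]; exact hu₂y)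
          _ ≤ 2 := by norm_num
        have hu₁w' : G.edist u₁ w ≤ 2 := by rw [SimpleGraph.edist_comm]; exact hu₁w
        have hwu₂ : G.edist w u₂ ≤ 2 := lemA G hu₁W hu₁w' h12
        have hu₂v' : G.edist u₂ v ≤ 2 := by rw [SimpleGraph.edist_comm]; exact hu₂v
        have hu₂w' : G.edist u₂ w ≤ 2 := by rw [SimpleGraph.edist_comm]; exact hwu₂
        have hvw : G.edist v w ≤ 2 := lemA G hu₂W hu₂v' hu₂w'
        exact hwNv ((mem_nbF G).mpr ⟨w, ⟨hw, hvw⟩, by simp [SimpleGraph.edist_self]⟩)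
      have hIH := ih _ hssub hTclosed
      have hCB := class_bd G hG hdiam hv
      have hsplit : ∑ u ∈ S \ nbF G v, d3 G u + ∑ u ∈ nbF G v, d3 G u = ∑ u ∈ S, d3 G u :=
        Finset.sum_sdiff hNS
      have hcards : (S \ nbF G v).card + (nbF G v).card = S.card :=
        Finset.card_sdiff_add_card_eq_card hNS
      calc 7 * G.minDegree * S.card
          = 7 * G.minDegree * (S \ nbF G v).card + 7 * G.minDegree * (nbF G v).card := by
            rw [← hcards]; ring
      _ ≤ 4 * ∑ u ∈ S \ nbF G v, d3 G u + 4 * ∑ u ∈ nbF G v, d3 G u := add_le_add hIH hCB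
      _ = 4 * ∑ u ∈ S, d3 G u := by rw [← hsplit]; ring
    · push_neg at hw
      have hlb : ∀ u ∈ S, 2 * G.minDegree ≤ d3 G u := fun u hu => hw u hu
      have hsum : S.card * (2 * G.minDegree) ≤ ∑ u ∈ S, d3 G u := by
        have := Finset.card_nsmul_le_sum S (d3 G) (2 * G.minDegree) hlb
        simpa [smul_eq_mul] using this
      nlinarith

end MainProof

/-- If `G` is a connected graph with diameter `≥ 3`, then `e(G³) ≥ (7/8)·δ(G)·|V(G)|`. -/
theorem stmt_7 {V : Type*} [Fintype V] (G : SimpleGraph V) [DecidableRel G.Adj]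
    (hG : G.Connected) (hdiam : ∃ u w : V, 3 ≤ G.edist u w) :
    7 * G.minDegree * Fintype.card V ≤ 8 * (cube G).edgeSet.ncard := by
  classical
  have hmain := main_count G hG hdiam Finset.univ (fun v _ _ => Finset.subset_univ _)
  rw [Finset.card_univ] at hmain
  letI : DecidableRel (cube G).Adj := Classical.decRel _
  have hdeg : ∀ v, d3 G v = (cube G).degree v := by
    intro v
    rw [← SimpleGraph.card_neighborFinset_eq_degree]
    rw [show d3 G v = ((cube G).neighborSet v).ncard from rfl]
    rw [← Set.ncard_coe_finset ((cube G).neighborFinset v)]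
    congr 1
    ext u
    simp [SimpleGraph.mem_neighborFinset, SimpleGraph.mem_neighborSet]
  have hsum : ∑ v, d3 G v = 2 * (cube G).edgeFinset.card := by
    calc ∑ v, d3 G v = ∑ v, (cube G).degree v := Finset.sum_congr rfl (fun v _ => hdeg v)
    _ = 2 * (cube G).edgeFinset.card := SimpleGraph.sum_degrees_eq_twice_card_edges _
  have hE : (cube G).edgeSet.ncard = (cube G).edgeFinset.card := by
    rw [← SimpleGraph.coe_edgeFinset, Set.ncard_coe_finset]
  calc 7 * G.minDegree * Fintype.card V ≤ 4 * ∑ v, d3 G v := hmain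
  _ = 8 * (cube G).edgeSet.ncard := by rw [hsum, hE]; ring
end

section
/- For the graph G_k (blocks H₁ = K_{2k+1}, H₂ = K_{2k} minus a perfect matching, H₃ = single vertex, H₄ = K_{2k} minus a perfect matching, H₅ = K_{2k+1}, with all edges between consecutive blocks), the cube G_k³ has 4k+1 vertices of degree 8k+2 and 4k+2 vertices of degree 6k+1, so e(G_k³) = 28k² + 16k + 2. -/
open SimpleGraph

/-- Sizes of the five blocks of `G_k`: `2k+1, 2k, 1, 2k, 2k+1`. -/
def blockSize (k : ℕ) : Fin 5 → ℕ := ![2 * k + 1, 2 * k, 1, 2 * k, 2 * k + 1]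

/-- The graph `G_k`: blocks `H₁ = K_{2k+1}`, `H₂ = K_{2k}` minus a perfect matching,
`H₃` a single vertex, `H₄ = K_{2k}` minus a perfect matching, `H₅ = K_{2k+1}`, with all
edges between consecutive blocks.  Within blocks 1 and 3 (0-indexed), the removed perfect
matching consists of the pairs `{2m, 2m+1}`. -/
def Gk (k : ℕ) : SimpleGraph ((i : Fin 5) × Fin (blockSize k i)) where
  Adj u v :=
    (u.1.val + 1 = v.1.val ∨ v.1.val + 1 = u.1.val) ∨
      (u.1 = v.1 ∧ u ≠ v ∧ ((u.1 = 1 ∨ u.1 = 3) → u.2.val / 2 ≠ v.2.val / 2))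
  symm := by
    constructor
    rintro u v (h | ⟨h1, h2, h3⟩)
    · exact Or.inl h.symm
    · exact Or.inr ⟨h1.symm, Ne.symm h2, fun hi => (h3 (by rw [h1]; exact hi)).symm⟩
  loopless := by constructor; rintro u (h | ⟨_, h, _⟩) <;> simp_all

section Aux
open Finset
abbrev Vk (k : ℕ) := (i : Fin 5) × Fin (blockSize k i)

variable {k : ℕ}

lemma bs_pos (hk : 1 ≤ k) (i : Fin 5) : 0 < blockSize k i := by
  fin_cases i <;> simp [blockSize] <;> omega

def mkv (hk : 1 ≤ k) (m : ℕ) (hm : m < 5) : Vk k := ⟨⟨m, hm⟩, ⟨0, bs_pos hk _⟩⟩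

lemma adj_step {u v : Vk k} (h : u.1.val + 1 = v.1.val ∨ v.1.val + 1 = u.1.val) :
    (Gk k).Adj u v := Or.inl h

lemma edist_le_one_of_adj {u v : Vk k} (h : (Gk k).Adj u v) : (Gk k).edist u v ≤ 1 := by
  simpa using edist_le h.toWalk

lemma walk_bound {u v : Vk k} (p : (Gk k).Walk u v) :
    v.1.val ≤ u.1.val + p.length ∧ u.1.val ≤ v.1.val + p.length := by
  induction p with
  | nil => simp
  | @cons a b c h p ih =>
    have hab : b.1.val ≤ a.1.val + 1 ∧ a.1.val ≤ b.1.val + 1 := by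
      rcases h with (h | h) | ⟨h, -⟩
      · omega
      · omega
      · rw [h]; omega
    simp only [SimpleGraph.Walk.length_cons]
    omega

lemma edist_le3_lt (hk : 1 ≤ k) (u v : Vk k) (hij : u.1.val < v.1.val)
    (h : v.1.val ≤ u.1.val + 3) : (Gk k).edist u v ≤ 3 := by
  have h5 : v.1.val < 5 := v.1.isLt
  have hc : v.1.val = u.1.val + 1 ∨ v.1.val = u.1.val + 2 ∨ v.1.val = u.1.val + 3 := by omega
  rcases hc with hc | hc | hc
  · calc (Gk k).edist u v ≤ 1 := edist_le_one_of_adj (adj_step (Or.inl hc.symm))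
      _ ≤ 3 := by norm_num
  · have hm : u.1.val + 1 < 5 := by omega
    let w := mkv (k := k) hk (u.1.val + 1) hm
    have hw : w.1.val = u.1.val + 1 := rfl
    calc (Gk k).edist u v ≤ (Gk k).edist u w + (Gk k).edist w v := SimpleGraph.edist_triangle
      _ ≤ 1 + 1 := add_le_add (edist_le_one_of_adj (adj_step (by omega)))
            (edist_le_one_of_adj (adj_step (by omega)))
      _ ≤ 3 := by norm_num
  · have hm1 : u.1.val + 1 < 5 := by omega
    have hm2 : u.1.val + 2 < 5 := by omega
    let w1 := mkv (k := k) hk (u.1.val + 1) hm1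
    let w2 := mkv (k := k) hk (u.1.val + 2) hm2
    have hw1 : w1.1.val = u.1.val + 1 := rfl
    have hw2 : w2.1.val = u.1.val + 2 := rfl
    calc (Gk k).edist u v ≤ (Gk k).edist u w1 + (Gk k).edist w1 v := SimpleGraph.edist_triangle
      _ ≤ 1 + ((Gk k).edist w1 w2 + (Gk k).edist w2 v) :=
          add_le_add (edist_le_one_of_adj (adj_step (by omega))) SimpleGraph.edist_triangle
      _ ≤ 1 + (1 + 1) := by
          gcongr <;> exact edist_le_one_of_adj (adj_step (by omega))
      _ ≤ 3 := by norm_num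

lemma edist_le3 (hk : 1 ≤ k) (u v : Vk k) (h : u.1.val ≤ v.1.val + 3)
    (h' : v.1.val ≤ u.1.val + 3) : (Gk k).edist u v ≤ 3 := by
  rcases Nat.lt_trichotomy u.1.val v.1.val with hlt | heq | hgt
  · exact edist_le3_lt hk u v hlt h'
  · by_cases huv : u = v
    · subst huv; simp
    · have h5 : u.1.val < 5 := u.1.isLt
      set n : ℕ := if u.1.val = 0 then 1 else u.1.val - 1 with hn
      have hn' : u.1.val + 1 = n ∨ n + 1 = u.1.val := by
        rcases eq_or_ne u.1.val 0 with h0 | h0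
        · left; simp [hn, h0]
        · right; rw [hn, if_neg h0]; omega
      have hn5 : n < 5 := by rw [hn]; split <;> omega
      let w := mkv (k := k) hk n hn5
      have hw : w.1.val = n := rfl
      calc (Gk k).edist u v ≤ (Gk k).edist u w + (Gk k).edist w v := SimpleGraph.edist_triangle
        _ ≤ 1 + 1 := add_le_add (edist_le_one_of_adj (adj_step (by omega)))
              (edist_le_one_of_adj (adj_step (by omega)))
        _ ≤ 3 := by norm_num
  · rw [SimpleGraph.edist_comm]
    exact edist_le3_lt hk v u hgt h

lemma cube_adj_iff (hk : 1 ≤ k) (u v : Vk k) :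
    (cube (Gk k)).Adj u v ↔ u ≠ v ∧ u.1.val ≤ v.1.val + 3 ∧ v.1.val ≤ u.1.val + 3 := by
  constructor
  · rintro ⟨hne, hd⟩
    refine ⟨hne, ?_, ?_⟩ <;>
    · have ht : (Gk k).edist u v ≠ ⊤ := fun h => by rw [h] at hd; exact absurd hd (by norm_num)
      obtain ⟨p, hp⟩ := exists_walk_of_edist_ne_top ht
      have hl : (p.length : ℕ∞) ≤ 3 := hp ▸ hd
      have hl3 : p.length ≤ 3 := by exact_mod_cast hl
      have := walk_bound p
      omega
  · rintro ⟨hne, h1, h2⟩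
    exact ⟨hne, edist_le3 hk u v h1 h2⟩

lemma card_ne {n : ℕ} (b : Fin n) [DecidablePred (fun x : Fin n => ¬ b = x)] :
    (univ.filter (fun x : Fin n => ¬ b = x)).card = n - 1 := by
  classical
  have h : (univ.filter (fun x : Fin n => ¬ b = x)) = univ.erase b := by
    ext x; simp [eq_comm]
  rw [h, Finset.card_erase_of_mem (Finset.mem_univ b)]
  simp

open scoped Classical in
lemma ncard_setOf (P : Vk k → Prop) :
    {v | P v}.ncard =
      ∑ i : Fin 5, (univ.filter (fun a : Fin (blockSize k i) => P ⟨i, a⟩)).card := by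
  rw [Set.ncard_eq_toFinset_card', Set.toFinset_setOf]
  rw [Finset.card_filter, ← Finset.univ_sigma_univ, Finset.sum_sigma]
  refine Finset.sum_congr rfl fun i _ => ?_
  rw [Finset.card_filter]

set_option maxRecDepth 8000 in
open scoped Classical in
lemma nbhd_ncard (hk : 1 ≤ k) (v : Vk k) :
    ((cube (Gk k)).neighborSet v).ncard =
      (if v.1.val = 0 ∨ v.1.val = 4 then 6 * k + 1 else 8 * k + 2) := by
  have hchar : (cube (Gk k)).neighborSet v =
      {u | v ≠ u ∧ v.1.val ≤ u.1.val + 3 ∧ u.1.val ≤ v.1.val + 3} := by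
    ext u
    simp only [mem_neighborSet, Set.mem_setOf_eq]
    rw [cube_adj_iff hk]
  rw [hchar, ncard_setOf]
  obtain ⟨⟨jv, hj⟩, b⟩ := v
  interval_cases jv
  · rw [if_pos (Or.inl rfl)]
    simp [Fin.sum_univ_five, Sigma.ext_iff]
    rw [card_ne]
    simp [blockSize]
    norm_num [show ((0:Fin 5):ℕ) = 0 from rfl, show ((1:Fin 5):ℕ) = 1 from rfl,
      show ((2:Fin 5):ℕ) = 2 from rfl, show ((3:Fin 5):ℕ) = 3 from rfl,
      show ((4:Fin 5):ℕ) = 4 from rfl, Finset.filter_ne, Finset.card_erase_of_mem, blockSize]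
    omega
  · rw [if_neg (by norm_num)]
    simp [Fin.sum_univ_five, Sigma.ext_iff]
    rw [card_ne]
    simp [blockSize]
    norm_num [show ((0:Fin 5):ℕ) = 0 from rfl, show ((1:Fin 5):ℕ) = 1 from rfl,
      show ((2:Fin 5):ℕ) = 2 from rfl, show ((3:Fin 5):ℕ) = 3 from rfl,
      show ((4:Fin 5):ℕ) = 4 from rfl, Finset.filter_ne, Finset.card_erase_of_mem, blockSize]
    omega
  · rw [if_neg (by norm_num)]
    simp [Fin.sum_univ_five, Sigma.ext_iff]
    rw [card_ne]
    simp [blockSize]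
    norm_num [show ((0:Fin 5):ℕ) = 0 from rfl, show ((1:Fin 5):ℕ) = 1 from rfl,
      show ((2:Fin 5):ℕ) = 2 from rfl, show ((3:Fin 5):ℕ) = 3 from rfl,
      show ((4:Fin 5):ℕ) = 4 from rfl, Finset.filter_ne, Finset.card_erase_of_mem, blockSize]
    omega
  · rw [if_neg (by norm_num)]
    simp [Fin.sum_univ_five, Sigma.ext_iff]
    rw [card_ne]
    simp [blockSize]
    norm_num [show ((0:Fin 5):ℕ) = 0 from rfl, show ((1:Fin 5):ℕ) = 1 from rfl,
      show ((2:Fin 5):ℕ) = 2 from rfl, show ((3:Fin 5):ℕ) = 3 from rfl,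
      show ((4:Fin 5):ℕ) = 4 from rfl, Finset.filter_ne, Finset.card_erase_of_mem, blockSize]
    omega
  · rw [if_pos (Or.inr rfl)]
    simp [Fin.sum_univ_five, Sigma.ext_iff]
    rw [card_ne]
    simp [blockSize]
    norm_num [show ((0:Fin 5):ℕ) = 0 from rfl, show ((1:Fin 5):ℕ) = 1 from rfl,
      show ((2:Fin 5):ℕ) = 2 from rfl, show ((3:Fin 5):ℕ) = 3 from rfl,
      show ((4:Fin 5):ℕ) = 4 from rfl, Finset.filter_ne, Finset.card_erase_of_mem, blockSize]
    omega

lemma count_big (hk : 1 ≤ k) :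
    {v : Vk k | ((cube (Gk k)).neighborSet v).ncard = 8 * k + 2}.ncard = 4 * k + 1 := by
  classical
  have hset : {v : Vk k | ((cube (Gk k)).neighborSet v).ncard = 8 * k + 2} =
      {v : Vk k | ¬(v.1.val = 0 ∨ v.1.val = 4)} := by
    ext v
    simp only [Set.mem_setOf_eq, nbhd_ncard hk v]
    split_ifs with h
    · simp only [h, not_true_eq_false, iff_false]; omega
    · exact iff_of_true rfl h
  rw [hset, ncard_setOf]
  simp only [Fin.sum_univ_five]
  simp
  simp [blockSize]
  omega

lemma count_small (hk : 1 ≤ k) :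
    {v : Vk k | ((cube (Gk k)).neighborSet v).ncard = 6 * k + 1}.ncard = 4 * k + 2 := by
  classical
  have hset : {v : Vk k | ((cube (Gk k)).neighborSet v).ncard = 6 * k + 1} =
      {v : Vk k | v.1.val = 0 ∨ v.1.val = 4} := by
    ext v
    simp only [Set.mem_setOf_eq, nbhd_ncard hk v]
    split_ifs with h
    · exact iff_of_true rfl h
    · simp only [h, iff_false]; omega
  rw [hset, ncard_setOf]
  simp only [Fin.sum_univ_five]
  simp
  simp [blockSize]
  omega

lemma count_edges (hk : 1 ≤ k) :
    (cube (Gk k)).edgeSet.ncard = 28 * k ^ 2 + 16 * k + 2 := by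
  classical
  have hdeg : ∀ v : Vk k, (cube (Gk k)).degree v = ((cube (Gk k)).neighborSet v).ncard := by
    intro v
    rw [← card_neighborSet_eq_degree, ← Nat.card_coe_set_eq, Nat.card_eq_fintype_card]
  have hsum := sum_degrees_eq_twice_card_edges (cube (Gk k))
  have hval : ∑ v : Vk k, (cube (Gk k)).degree v = 2 * (28 * k ^ 2 + 16 * k + 2) := by
    calc ∑ v : Vk k, (cube (Gk k)).degree v
        = ∑ v : Vk k, (if v.1.val = 0 ∨ v.1.val = 4 then 6 * k + 1 else 8 * k + 2) :=
          Finset.sum_congr rfl fun v _ => by rw [hdeg, nbhd_ncard hk]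
      _ = 2 * (28 * k ^ 2 + 16 * k + 2) := by
          rw [← Finset.univ_sigma_univ, Finset.sum_sigma]
          simp only [Fin.sum_univ_five]
          simp
          simp [blockSize]
          ring
  rw [hsum] at hval
  have hcard : (cube (Gk k)).edgeFinset.card = 28 * k ^ 2 + 16 * k + 2 := by omega
  rw [← Nat.card_coe_set_eq, Nat.card_eq_fintype_card, ← SimpleGraph.edgeFinset_card]
  exact hcard

end Aux

/-- `G_k³` has `4k+1` vertices of degree `8k+2` and `4k+2` vertices of degree `6k+1`,
so `e(G_k³) = 28k² + 16k + 2`. -/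
theorem stmt_10 (k : ℕ) (hk : 1 ≤ k) :
    {v | ((cube (Gk k)).neighborSet v).ncard = 8 * k + 2}.ncard = 4 * k + 1 ∧
      {v | ((cube (Gk k)).neighborSet v).ncard = 6 * k + 1}.ncard = 4 * k + 2 ∧
      (cube (Gk k)).edgeSet.ncard = 28 * k ^ 2 + 16 * k + 2 :=
  ⟨count_big hk, count_small hk, count_edges hk⟩
end

section
/- The ratio e(G_k³)/e(G_k) = (28k² + 16k + 2)/(16k² + 6k) tends to 7/4 as k → ∞; hence the constant 7/8 in the bound e(G³) ≥ (7/8)·δ(G)·|V(G)| for connected graphs of diameter ≥ 3 cannot be replaced by any larger constant. -/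
open SimpleGraph

namespace Extremal

open Finset

abbrev Vtx (s : ℕ) := Option (Fin 4 × Fin (s + 1))

def lay {s : ℕ} : Vtx s → ℕ
  | none => 2
  | some (i, _) => if i.val ≤ 1 then i.val else i.val + 1

lemma lay_le (s : ℕ) (v : Vtx s) : lay v ≤ 4 := by
  rcases v with _ | ⟨i, j⟩
  · simp [lay]
  · have := i.2
    simp only [lay]
    split <;> omega

def Gr (s : ℕ) : SimpleGraph (Vtx s) where
  Adj u v := u ≠ v ∧ lay u ≤ lay v + 1 ∧ lay v ≤ lay u + 1
  symm := ⟨fun u v h => ⟨h.1.symm, h.2.2, h.2.1⟩⟩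
  loopless := ⟨fun u h => h.1 rfl⟩

instance (s : ℕ) : DecidableRel (Gr s).Adj := fun u v =>
  inferInstanceAs (Decidable (u ≠ v ∧ lay u ≤ lay v + 1 ∧ lay v ≤ lay u + 1))

lemma adj_iff {s : ℕ} {u v : Vtx s} :
    (Gr s).Adj u v ↔ u ≠ v ∧ lay u ≤ lay v + 1 ∧ lay v ≤ lay u + 1 := Iff.rfl

lemma lay_walk {s : ℕ} {u v : Vtx s} (p : (Gr s).Walk u v) :
    lay u ≤ lay v + p.length ∧ lay v ≤ lay u + p.length := by
  induction p with
  | nil => simp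
  | cons h p ih =>
    obtain ⟨-, h1, h2⟩ := adj_iff.mp h
    simp only [SimpleGraph.Walk.length_cons]
    omega

lemma lay_of_edist_le {s : ℕ} {u v : Vtx s} {n : ℕ} (h : (Gr s).edist u v ≤ n) :
    lay u ≤ lay v + n ∧ lay v ≤ lay u + n := by
  have hne : (Gr s).edist u v ≠ ⊤ := by
    intro ht
    rw [ht] at h
    simp at h
  obtain ⟨p, hp⟩ := (SimpleGraph.reachable_of_edist_ne_top hne).exists_walk_length_eq_edist
  rw [← hp] at h
  have hlen : p.length ≤ n := by exact_mod_cast h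
  have := lay_walk p
  omega

lemma adj_edist_le_one {s : ℕ} {u v : Vtx s} (h : (Gr s).Adj u v) : (Gr s).edist u v ≤ 1 :=
  (SimpleGraph.edist_eq_one_iff_adj.mpr h).le

lemma edist_none_of_mid {s : ℕ} (u : Vtx s) (h1 : 1 ≤ lay u) (h2 : lay u ≤ 3) :
    (Gr s).edist u none ≤ 1 := by
  rcases u with _ | ⟨i, j⟩
  · simp [SimpleGraph.edist_self]
  · exact adj_edist_le_one ⟨by simp, by simpa [lay] using h2, by
      show lay (none : Vtx s) ≤ _ + 1
      simpa [lay] using h1⟩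

lemma edist_none {s : ℕ} (u : Vtx s) : (Gr s).edist u none ≤ 2 := by
  rcases u with _ | ⟨⟨iv, hiv⟩, j⟩
  · simp [SimpleGraph.edist_self]
  · interval_cases iv
    · -- layer 0, go through some (1, j)
      have h1 : (Gr s).Adj (some (⟨0, by omega⟩, j)) (some (⟨1, by omega⟩, j)) := by
        refine ⟨by simp [Fin.ext_iff], ?_, ?_⟩ <;> simp [lay]
      calc (Gr s).edist (some (⟨0, by omega⟩, j)) none
          ≤ (Gr s).edist (some (⟨0, by omega⟩, j)) (some (⟨1, by omega⟩, j))
            + (Gr s).edist (some (⟨1, by omega⟩, j)) none := SimpleGraph.edist_triangle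
        _ ≤ 1 + 1 := add_le_add (adj_edist_le_one h1)
            (edist_none_of_mid _ (by simp [lay]) (by simp [lay]))
        _ = 2 := by norm_num
    · exact (edist_none_of_mid _ (by simp [lay]) (by simp [lay])).trans (by norm_num)
    · exact (edist_none_of_mid _ (by simp [lay]) (by simp [lay])).trans (by norm_num)
    · -- layer 4, go through some (2, j)
      have h1 : (Gr s).Adj (some (⟨3, by omega⟩, j)) (some (⟨2, by omega⟩, j)) :=
        ⟨by simp only [ne_eq, Option.some.injEq, Prod.mk.injEq, Fin.mk.injEq]; omega,
         by show (4:ℕ) ≤ 3 + 1; norm_num, by show (3:ℕ) ≤ 4 + 1; norm_num⟩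
      calc (Gr s).edist (some (⟨3, by omega⟩, j)) none
          ≤ (Gr s).edist (some (⟨3, by omega⟩, j)) (some (⟨2, by omega⟩, j))
            + (Gr s).edist (some (⟨2, by omega⟩, j)) none := SimpleGraph.edist_triangle
        _ ≤ 1 + 1 := add_le_add (adj_edist_le_one h1)
            (edist_none_of_mid _ (by simp [lay]) (by simp [lay]))
        _ = 2 := by norm_num

lemma conn (s : ℕ) : (Gr s).Connected := by
  rw [SimpleGraph.connected_iff_exists_forall_reachable]
  refine ⟨none, fun w => ?_⟩
  have h : (Gr s).edist w none ≠ ⊤ := by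
    intro ht
    have := edist_none w
    rw [ht] at this
    simp at this
  exact (SimpleGraph.reachable_of_edist_ne_top h).symm

lemma three_le_edist (s : ℕ) :
    3 ≤ (Gr s).edist (some (⟨0, by omega⟩, 0)) (some (⟨3, by omega⟩, 0)) := by
  by_contra hlt
  push_neg at hlt
  have h := lay_of_edist_le (n := 2) (by exact_mod_cast Order.le_of_lt_add_one (by
    exact lt_of_lt_of_eq hlt (by norm_num)))
  simp only [lay, show ((3:Fin 4)).val = 3 from rfl, show ((0:Fin 4)).val = 0 from rfl] at h
  norm_num at h

-- counting machinery

def lv (i : Fin 4) : ℕ := if i.val ≤ 1 then i.val else i.val + 1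

lemma lay_some_lv {s : ℕ} (i : Fin 4) (j : Fin (s+1)) :
    lay (some (i, j) : Vtx s) = lv i := rfl

lemma card_layer (s : ℕ) (p : ℕ → Prop) [DecidablePred p] :
    #(Finset.univ.filter fun u : Vtx s => p (lay u)) =
      (if p 2 then 1 else 0) + (s+1) * #(Finset.univ.filter fun i : Fin 4 => p (lv i)) := by
  rw [Finset.card_filter (fun u : Vtx s => p (lay u)), univ_option, Finset.sum_insertNone]
  congr 1
  simp only [Finset.card_filter]
  rw [Fintype.sum_prod_type]
  refine Eq.trans (Finset.sum_congr rfl fun i _ => ?_) (by rw [← Finset.mul_sum])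
  simp [lv, lay, Finset.sum_const, mul_comm]
  split <;> split <;> simp

lemma neighborFinset_eq (s : ℕ) (v : Vtx s) :
    (Gr s).neighborFinset v
      = (Finset.univ.filter fun u : Vtx s => lay u ≤ lay v + 1 ∧ lay v ≤ lay u + 1).erase v := by
  ext u
  simp only [SimpleGraph.mem_neighborFinset, Finset.mem_erase, Finset.mem_filter,
    Finset.mem_univ, true_and, and_true, adj_iff]
  constructor
  · rintro ⟨h1, h2, h3⟩
    exact ⟨fun e => h1 e.symm, h3, h2⟩
  · rintro ⟨h1, h2, h3⟩
    exact ⟨fun e => h1 e.symm, h3, h2⟩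

lemma degree_eq (s : ℕ) (v : Vtx s) :
    (Gr s).degree v = if lay v = 0 ∨ lay v = 4 then 2*s+1 else 2*s+2 := by
  rw [← SimpleGraph.card_neighborFinset_eq_degree, neighborFinset_eq,
    Finset.card_erase_of_mem (by simp),
    card_layer s (fun m => m ≤ lay v + 1 ∧ lay v ≤ m + 1)]
  have hle := lay_le s v
  set m := lay v with hm
  clear_value m
  interval_cases m <;>
    · rw [show #(Finset.univ.filter fun i : Fin 4 => lv i ≤ _ + 1 ∧ _ ≤ lv i + 1) = 2 from by decide]
      norm_num
      omega

lemma minDeg (s : ℕ) : (Gr s).minDegree = 2*s+1 := by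
  apply le_antisymm
  · have h := SimpleGraph.minDegree_le_degree (Gr s) (some (⟨0, by omega⟩, 0))
    rw [degree_eq] at h
    simpa [lay] using h
  · apply SimpleGraph.le_minDegree_of_forall_le_degree
    intro v
    rw [degree_eq]
    split <;> omega

lemma cube_adj_iff {s : ℕ} {u v : Vtx s} :
    (cube (Gr s)).Adj u v ↔ u ≠ v ∧ lay u ≤ lay v + 3 ∧ lay v ≤ lay u + 3 := by
  constructor
  · rintro ⟨hne, hd⟩
    exact ⟨hne, lay_of_edist_le (n := 3) (by exact_mod_cast hd)⟩
  · rintro ⟨hne, h1, h2⟩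
    refine ⟨hne, ?_⟩
    by_cases hu : 1 ≤ lay u ∧ lay u ≤ 3
    · calc (Gr s).edist u v ≤ (Gr s).edist u none + (Gr s).edist none v :=
          SimpleGraph.edist_triangle
        _ ≤ 1 + 2 := add_le_add (edist_none_of_mid u hu.1 hu.2)
            (by rw [SimpleGraph.edist_comm]; exact edist_none v)
        _ = 3 := by norm_num
    by_cases hv : 1 ≤ lay v ∧ lay v ≤ 3
    · calc (Gr s).edist u v ≤ (Gr s).edist u none + (Gr s).edist none v :=
          SimpleGraph.edist_triangle
        _ ≤ 2 + 1 := add_le_add (edist_none u)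
            (by rw [SimpleGraph.edist_comm]; exact edist_none_of_mid v hv.1 hv.2)
        _ = 3 := by norm_num
    · have hu4 := lay_le s u
      have hv4 := lay_le s v
      push_neg at hu hv
      refine (adj_edist_le_one ⟨hne, by omega, by omega⟩).trans (by norm_num)

lemma cube_neighborFinset_eq (s : ℕ) [DecidableRel (cube (Gr s)).Adj] (v : Vtx s) :
    (cube (Gr s)).neighborFinset v
      = (Finset.univ.filter fun u : Vtx s => lay u ≤ lay v + 3 ∧ lay v ≤ lay u + 3).erase v := by
  ext u
  simp only [SimpleGraph.mem_neighborFinset, Finset.mem_erase, Finset.mem_filter,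
    Finset.mem_univ, true_and, and_true, cube_adj_iff]
  constructor
  · rintro ⟨h1, h2, h3⟩
    exact ⟨fun e => h1 e.symm, h3, h2⟩
  · rintro ⟨h1, h2, h3⟩
    exact ⟨fun e => h1 e.symm, h3, h2⟩

lemma cube_degree_eq (s : ℕ) [DecidableRel (cube (Gr s)).Adj] (v : Vtx s) :
    (cube (Gr s)).degree v = if lay v = 0 ∨ lay v = 4 then 3*s+3 else 4*s+4 := by
  rw [← SimpleGraph.card_neighborFinset_eq_degree, cube_neighborFinset_eq,
    Finset.card_erase_of_mem (by simp),
    card_layer s (fun m => m ≤ lay v + 3 ∧ lay v ≤ m + 3)]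
  have hle := lay_le s v
  set m := lay v with hm
  clear_value m
  interval_cases m <;>
    first
    | · rw [show #(Finset.univ.filter fun i : Fin 4 => lv i ≤ _ + 3 ∧ _ ≤ lv i + 3) = 3 from by decide]
        norm_num
        omega
    | · rw [show #(Finset.univ.filter fun i : Fin 4 => lv i ≤ _ + 3 ∧ _ ≤ lv i + 3) = 4 from by decide]
        norm_num
        omega

lemma cube_card_edge (s : ℕ) [DecidableRel (cube (Gr s)).Adj] :
    #(cube (Gr s)).edgeFinset = 7*s^2+16*s+9 := by
  have hP : #(Finset.univ.filter fun v : Vtx s => lay v = 0 ∨ lay v = 4) = 2*s+2 := by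
    rw [card_layer s (fun m => m = 0 ∨ m = 4),
      show #(Finset.univ.filter fun i : Fin 4 => lv i = 0 ∨ lv i = 4) = 2 from by decide]
    norm_num
    omega
  have hcardV : Fintype.card (Vtx s) = 4*s+5 := by
    simp only [Fintype.card_option, Fintype.card_prod, Fintype.card_fin]
    omega
  have hNP : #(Finset.univ.filter fun v : Vtx s => ¬(lay v = 0 ∨ lay v = 4)) = 2*s+3 := by
    rw [Finset.filter_not, Finset.card_sdiff_of_subset (Finset.filter_subset _ _), Finset.card_univ,
      hcardV, hP]
    omega
  have hsum := SimpleGraph.sum_degrees_eq_twice_card_edges (cube (Gr s))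
  rw [Finset.sum_congr rfl (fun v _ => cube_degree_eq s v)] at hsum
  simp only [Finset.sum_ite, Finset.sum_const, smul_eq_mul,
    Finset.filter_congr_decidable] at hsum
  rw [hP, hNP] at hsum
  apply Nat.eq_of_mul_eq_mul_left (show 0 < 2 by norm_num)
  rw [← hsum]
  ring

lemma card_vtx (s : ℕ) : Fintype.card (Vtx s) = 4*s+5 := by
  simp only [Fintype.card_option, Fintype.card_prod, Fintype.card_fin]
  omega

lemma cube_ncard (s : ℕ) : (cube (Gr s)).edgeSet.ncard = 7*s^2+16*s+9 := by
  classical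
  rw [← SimpleGraph.coe_edgeFinset, Set.ncard_coe_finset, cube_card_edge]

lemma aux_tendsto (a b c d e f : ℝ) (hd : d ≠ 0) :
    Filter.Tendsto (fun k : ℕ => (a*k^2 + b*k + c) / (d*k^2 + e*k + f)) Filter.atTop
      (nhds (a/d)) := by
  have h0 : Filter.Tendsto (fun k : ℕ => 1/(k:ℝ)) Filter.atTop (nhds 0) :=
    tendsto_one_div_atTop_nhds_zero_nat
  have hnum : Filter.Tendsto (fun k : ℕ => a + b*(1/(k:ℝ)) + c*(1/(k:ℝ))^2) Filter.atTop
      (nhds (a + b*0 + c*0^2)) :=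
    (tendsto_const_nhds.add (tendsto_const_nhds.mul h0)).add
      (tendsto_const_nhds.mul (h0.pow 2))
  have hden : Filter.Tendsto (fun k : ℕ => d + e*(1/(k:ℝ)) + f*(1/(k:ℝ))^2) Filter.atTop
      (nhds (d + e*0 + f*0^2)) :=
    (tendsto_const_nhds.add (tendsto_const_nhds.mul h0)).add
      (tendsto_const_nhds.mul (h0.pow 2))
  have hne : d + e*0 + f*0^2 ≠ 0 := by simpa using hd
  have hdiv := hnum.div hden hne
  have hval : (a + b*0 + c*0^2) / (d + e*0 + f*0^2) = a/d := by norm_num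
  rw [hval] at hdiv
  apply hdiv.congr'
  filter_upwards [Filter.eventually_ge_atTop 1] with k hk
  have hk0 : (k:ℝ) ≠ 0 := Nat.cast_ne_zero.mpr (by omega)
  have e1 : a + b*(1/(k:ℝ)) + c*(1/(k:ℝ))^2 = (a*(k:ℝ)^2 + b*k + c)/(k:ℝ)^2 := by
    field_simp
  have e2 : d + e*(1/(k:ℝ)) + f*(1/(k:ℝ))^2 = (d*(k:ℝ)^2 + e*k + f)/(k:ℝ)^2 := by
    field_simp
  simp only [Pi.div_apply]
  rw [e1, e2, div_div_div_cancel_right₀ (pow_ne_zero 2 hk0)]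

end Extremal

/-- `e(G_k³)/e(G_k) = (28k² + 16k + 2)/(16k² + 6k) → 7/4`, hence the constant `7/8` in
`e(G³) ≥ (7/8)·δ(G)·|V(G)|` cannot be replaced by any larger constant. -/
theorem stmt_11 :
    Filter.Tendsto
      (fun k : ℕ => ((28 * (k : ℝ) ^ 2 + 16 * k + 2) / (16 * k ^ 2 + 6 * k)))
      Filter.atTop (nhds (7 / 4)) ∧
    ∀ c : ℝ,
      (∀ (V : Type) (_ : Fintype V) (G : SimpleGraph V) (_ : DecidableRel G.Adj),
        G.Connected → (∃ u w : V, 3 ≤ G.edist u w) →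
        c * ((G.minDegree : ℝ) * (Fintype.card V : ℝ)) ≤ ((cube G).edgeSet.ncard : ℝ)) →
      c ≤ 7 / 8 := by
  constructor
  · have h := Extremal.aux_tendsto 28 16 2 16 6 0 (by norm_num)
    rw [show (28:ℝ)/16 = 7/4 by norm_num] at h
    exact h.congr (by intro k; norm_num)
  · intro c hc
    have key : ∀ s : ℕ, c * ((2*(s:ℝ)+1) * (4*(s:ℝ)+5)) ≤ 7*(s:ℝ)^2+16*(s:ℝ)+9 := by
      intro s
      classical
      have h := hc (Extremal.Vtx s) inferInstance (Extremal.Gr s) inferInstance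
        (Extremal.conn s)
        ⟨some (⟨0, by omega⟩, 0), some (⟨3, by omega⟩, 0), Extremal.three_le_edist s⟩
      rw [Extremal.minDeg, Extremal.cube_ncard, Extremal.card_vtx] at h
      push_cast at h
      linarith
    have hg : Filter.Tendsto
        (fun s : ℕ => ((7*(s:ℝ)^2+16*(s:ℝ)+9) / ((2*(s:ℝ)+1)*(4*(s:ℝ)+5))))
        Filter.atTop (nhds (7/8)) := by
      have h := Extremal.aux_tendsto 7 16 9 8 14 5 (by norm_num)
      exact h.congr (by
        intro k
        rw [show ((2*(k:ℝ)+1)*(4*(k:ℝ)+5)) = 8*(k:ℝ)^2+14*k+5 by ring])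
    refine ge_of_tendsto hg (Filter.Eventually.of_forall fun s => ?_)
    rw [le_div_iff₀ (by positivity)]
    exact key s
end

section
/- Let G be a finite simple connected graph of diameter ≥ 3 with set Z of doubling vertices, and let Y₁,…,Y_ℓ be the unions of equivalence classes of components of G − Z under the relation that closed neighborhoods intersect. Then the closed neighborhoods N(Y₁),…,N(Y_ℓ) are pairwise disjoint. -/
open SimpleGraph

/-- Key lemma: a non-doubling vertex cannot be within distance 2 of two vertices
that are at distance ≥ 3 from each other. -/
lemma key_s17 {V : Type*} [Fintype V] (G : SimpleGraph V) [DecidableRel G.Adj]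
    {t x y : V} (ht : t ∉ doubling G) (hx : G.edist t x ≤ 2) (hy : G.edist t y ≤ 2) :
    G.edist x y ≤ 2 := by
  by_contra hxy
  push_neg at hxy
  apply ht
  have : Nonempty V := ⟨t⟩
  classical
  set Nx : Finset V := insert x (G.neighborFinset x) with hNx
  set Ny : Finset V := insert y (G.neighborFinset y) with hNy
  have hdisj : Disjoint Nx Ny := by
    rw [Finset.disjoint_left]
    intro s hs hs'
    have h1 : G.edist x s ≤ 1 := by
      rcases Finset.mem_insert.mp hs with h | h
      · subst h; simp [edist_self]
      · exact le_of_eq (edist_eq_one_iff_adj.mpr (G.mem_neighborFinset x s |>.mp h))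
    have h2 : G.edist s y ≤ 1 := by
      rcases Finset.mem_insert.mp hs' with h | h
      · subst h; simp [edist_self]
      · rw [edist_comm]
        exact le_of_eq (edist_eq_one_iff_adj.mpr (G.mem_neighborFinset y s |>.mp h))
    have h3 : G.edist x y ≤ 2 :=
      ((G.edist_triangle (v := s) (u := x) (w := y)).trans (add_le_add h1 h2)).trans_eq
        (by norm_num)
    exact absurd h3 hxy.not_ge
  have hcardx : G.minDegree + 1 ≤ Nx.card := by
    rw [hNx, Finset.card_insert_of_notMem (by simp)]
    have := G.minDegree_le_degree x
    rw [← card_neighborFinset_eq_degree] at this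
    omega
  have hcardy : G.minDegree + 1 ≤ Ny.card := by
    rw [hNy, Finset.card_insert_of_notMem (by simp)]
    have := G.minDegree_le_degree y
    rw [← card_neighborFinset_eq_degree] at this
    omega
  have hsub : ((Nx ∪ Ny).erase t : Set V) ⊆ (cube G).neighborSet t := by
    intro s hs
    simp only [Finset.coe_erase, Set.mem_diff, Finset.coe_union, Set.mem_union,
      Set.mem_singleton_iff] at hs
    obtain ⟨hs, hst⟩ := hs
    constructor
    · exact fun h => hst (h.symm ▸ rfl)
    · -- G.edist t s ≤ 3
      rcases hs with hs | hs
      · rcases Finset.mem_insert.mp (by exact_mod_cast hs) with h | h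
        · subst h; exact hx.trans (by norm_num)
        · calc G.edist t s ≤ G.edist t x + G.edist x s := G.edist_triangle
            _ ≤ 2 + 1 := add_le_add hx
              (le_of_eq (edist_eq_one_iff_adj.mpr (G.mem_neighborFinset x s |>.mp h)))
            _ = 3 := by norm_num
      · rcases Finset.mem_insert.mp (by exact_mod_cast hs) with h | h
        · subst h; exact hy.trans (by norm_num)
        · calc G.edist t s ≤ G.edist t y + G.edist y s := G.edist_triangle
            _ ≤ 2 + 1 := add_le_add hy
              (le_of_eq (edist_eq_one_iff_adj.mpr (G.mem_neighborFinset y s |>.mp h)))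
            _ = 3 := by norm_num
  have hcard : 2 * G.minDegree + 1 ≤ ((Nx ∪ Ny).erase t).card := by
    have h1 : (Nx ∪ Ny).card = Nx.card + Ny.card :=
      Finset.card_union_of_disjoint hdisj
    have h2 : (Nx ∪ Ny).card - 1 ≤ ((Nx ∪ Ny).erase t).card :=
      Finset.pred_card_le_card_erase
    omega
  have : 2 * G.minDegree ≤ ((cube G).neighborSet t).ncard := by
    calc 2 * G.minDegree ≤ ((Nx ∪ Ny).erase t).card := by omega
      _ = (((Nx ∪ Ny).erase t : Finset V) : Set V).ncard := (Set.ncard_coe_finset _).symm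
      _ ≤ ((cube G).neighborSet t).ncard := Set.ncard_le_ncard hsub (Set.toFinite _)
  exact this

/-- Propagation: distance ≤ 2 from `a` propagates along walks in `G - Z`. -/
lemma prop2 {V : Type*} [Fintype V] (G : SimpleGraph V) [DecidableRel G.Adj] :
    ∀ {v w : ((doubling G)ᶜ : Set V)} (_ : (G.induce (doubling G)ᶜ).Walk v w) (a : V),
      G.edist a v ≤ 2 → G.edist a w ≤ 2 := by
  intro v w p
  induction p with
  | nil => exact fun a h => h
  | @cons u m w h q ih =>
    intro a ha
    apply ih
    have hadj : G.Adj u m := h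
    have hum : G.edist (u : V) (m : V) ≤ 2 :=
      (le_of_eq (edist_eq_one_iff_adj.mpr hadj)).trans (by norm_num)
    exact key_s17 G (t := (u : V)) (x := a) (y := ((m : ((doubling G)ᶜ : Set V)) : V)) u.2
      (by rw [edist_comm]; exact ha) hum

/-- `compNear` from a pair of support vertices at distance ≤ 2. -/
lemma near_of {V : Type*} [Fintype V] (G : SimpleGraph V) [DecidableRel G.Adj]
    {c d : (G.induce (doubling G)ᶜ).ConnectedComponent} {x y : V}
    (hx : x ∈ compSupp G c) (hy : y ∈ compSupp G d) (hxy : G.edist x y ≤ 2) :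
    compNear G c d := by
  rcases le_or_gt (G.edist x y) 1 with h | h
  · exact ⟨y, ⟨x, hx, h⟩, ⟨y, hy, by simp [edist_self]⟩⟩
  · have h2 : G.edist x y = 2 := le_antisymm hxy (by
      have : (1 : ℕ∞) + 1 ≤ G.edist x y := Order.add_one_le_of_lt h
      rw [one_add_one_eq_two] at this; exact this)
    obtain ⟨p, hp⟩ := exists_walk_of_edist_eq_coe (k := 2) (by exact_mod_cast h2)
    refine ⟨p.getVert 1, ⟨x, hx, ?_⟩, ⟨y, hy, ?_⟩⟩
    · have : G.Adj (p.getVert 0) (p.getVert 1) := p.adj_getVert_succ (by omega)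
      rw [p.getVert_zero] at this
      exact le_of_eq (edist_eq_one_iff_adj.mpr this)
    · have : G.Adj (p.getVert 1) (p.getVert 2) := p.adj_getVert_succ (by omega)
      rw [show p.getVert 2 = y from by rw [← hp]; exact p.getVert_length] at this
      exact le_of_eq (edist_eq_one_iff_adj.mpr this.symm)

/-- `compNear` gives a pair of support vertices at distance ≤ 2. -/
lemma near_to {V : Type*} [Fintype V] (G : SimpleGraph V) [DecidableRel G.Adj]
    {c d : (G.induce (doubling G)ᶜ).ConnectedComponent} (h : compNear G c d) :
    ∃ x ∈ compSupp G c, ∃ y ∈ compSupp G d, G.edist x y ≤ 2 := by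
  obtain ⟨u, ⟨x, hx, hxu⟩, ⟨y, hy, hyu⟩⟩ := h
  refine ⟨x, hx, y, hy, ?_⟩
  calc G.edist x y ≤ G.edist x u + G.edist u y := G.edist_triangle
    _ ≤ 1 + 1 := add_le_add hxu (by rw [edist_comm]; exact hyu)
    _ = 2 := by norm_num

lemma near_symm {V : Type*} [Fintype V] (G : SimpleGraph V) [DecidableRel G.Adj]
    {c d : (G.induce (doubling G)ᶜ).ConnectedComponent} (h : compNear G c d) :
    compNear G d c := by
  obtain ⟨u, h1, h2⟩ := h; exact ⟨u, h2, h1⟩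

lemma near_trans {V : Type*} [Fintype V] (G : SimpleGraph V) [DecidableRel G.Adj]
    {c e d : (G.induce (doubling G)ᶜ).ConnectedComponent}
    (h1 : compNear G c e) (h2 : compNear G e d) : compNear G c d := by
  obtain ⟨x, hx, y, hy, hxy⟩ := near_to G h1
  obtain ⟨y', hy', w, hw, hyw⟩ := near_to G h2
  obtain ⟨ys, hys, rfl⟩ := hy
  obtain ⟨ys', hys', rfl⟩ := hy'
  rw [SimpleGraph.ConnectedComponent.mem_supp_iff] at hys hys'
  have hreach : (G.induce (doubling G)ᶜ).Reachable ys ys' :=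
    SimpleGraph.ConnectedComponent.exact (hys.trans hys'.symm)
  obtain ⟨p⟩ := hreach
  have hxy' : G.edist x ys' ≤ 2 := prop2 G p x hxy
  have : G.edist x w ≤ 2 := key_s17 G ys'.2 (by rwa [edist_comm]) hyw
  exact near_of G hx hw this

lemma near_refl {V : Type*} [Fintype V] (G : SimpleGraph V) [DecidableRel G.Adj]
    (c : (G.induce (doubling G)ᶜ).ConnectedComponent) : compNear G c c := by
  obtain ⟨v, hv⟩ := c.exists_rep
  have hmem : (v : V) ∈ compSupp G c :=
    ⟨v, SimpleGraph.ConnectedComponent.mem_supp_iff _ _ |>.mpr hv, rfl⟩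
  exact ⟨v, ⟨v, hmem, by simp [edist_self]⟩, ⟨v, hmem, by simp [edist_self]⟩⟩

lemma classUnion_eq {V : Type*} [Fintype V] (G : SimpleGraph V) [DecidableRel G.Adj]
    {c d : (G.induce (doubling G)ᶜ).ConnectedComponent} (h : compNear G c d) :
    classUnion G c = classUnion G d := by
  unfold classUnion
  ext x
  simp only [Set.mem_iUnion, Set.mem_setOf_eq, exists_prop]
  constructor
  · rintro ⟨e, he, hx⟩
    exact ⟨e, near_trans G (near_symm G h) he, hx⟩
  · rintro ⟨e, he, hx⟩
    exact ⟨e, near_trans G h he, hx⟩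

/-- Distinct unions of equivalence classes of components of `G - Z` have disjoint
closed neighborhoods. -/
theorem stmt_17 {V : Type*} [Fintype V] (G : SimpleGraph V) [DecidableRel G.Adj]
    (hG : G.Connected) (hdiam : ∃ u w : V, 3 ≤ G.edist u w)
    (c d : (G.induce (doubling G)ᶜ).ConnectedComponent)
    (hne : classUnion G c ≠ classUnion G d) :
    Disjoint (nbhd G 1 (classUnion G c)) (nbhd G 1 (classUnion G d)) := by
  rw [Set.disjoint_left]
  rintro u ⟨x, hx, hxu⟩ ⟨y, hy, hyu⟩
  simp only [classUnion, Set.mem_iUnion, Set.mem_setOf_eq, exists_prop] at hx hy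
  obtain ⟨A, hcA, hxA⟩ := hx
  obtain ⟨B, hdB, hyB⟩ := hy
  have hxy : G.edist x y ≤ 2 := by
    calc G.edist x y ≤ G.edist x u + G.edist u y := G.edist_triangle
      _ ≤ 1 + 1 := add_le_add hxu (by rw [edist_comm]; exact hyu)
      _ = 2 := by norm_num
  have hAB : compNear G A B := near_of G hxA hyB hxy
  have : compNear G c d := near_trans G (near_trans G hcA hAB) (near_symm G hdB)
  exact hne (classUnion_eq G this)
end
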